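/- arXiv:2511.21868 — 5 statements merged into one kernel-verified Lean document; each statement's English description precedes it below -/
import Mathlib

section
/- Let G be a d-regular graph on n vertices, and suppose there exist nonempty sets S,T ⊆ V and a real α > 0 such that |E(S,T)| ≥ d|S||T|/n + α·√(|S||T|). Then for every even natural number t, d_TV(t) ≥ (1/2)·(α/(2d))^{2t} − min(|S|,|T|)/(2n). -/
open Finset

/-- The random-walk matrix `P = A/d` of a graph `G` (intended: `d`-regular). -/
noncomputable def walkMatrix {n : ℕ} (G : SimpleGraph (Fin n)) [DecidableRel G.Adj]
    (d : ℕ) : Matrix (Fin n) (Fin n) ℝ :=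
  (d : ℝ)⁻¹ • G.adjMatrix ℝ

/-- `p` is a probability distribution on `Fin n`. -/
def IsProbDist {n : ℕ} (p : Fin n → ℝ) : Prop :=
  (∀ v, 0 ≤ p v) ∧ ∑ v, p v = 1

/-- Total variation distance of `p` from the uniform distribution on `Fin n`. -/
noncomputable def tvFromUniform {n : ℕ} (p : Fin n → ℝ) : ℝ :=
  (1 / 2) * ∑ v, |p v - 1 / (n : ℝ)|

/-- `d_TV(t)`: worst-case total variation distance from uniform after `t` steps
of the random walk. -/
noncomputable def dTV {n : ℕ} (G : SimpleGraph (Fin n)) [DecidableRel G.Adj]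
    (d t : ℕ) : ℝ :=
  sSup {x : ℝ | ∃ p : Fin n → ℝ, IsProbDist p ∧
    x = tvFromUniform ((walkMatrix G d ^ t).mulVec p)}

/-- The `ε`-mixing time `τ_ε(P)`. -/
noncomputable def mixingTime {n : ℕ} (G : SimpleGraph (Fin n)) [DecidableRel G.Adj]
    (d : ℕ) (ε : ℝ) : ℕ :=
  sInf {t : ℕ | dTV G d t ≤ ε}

/-- `|E(S,T)|`: the number of ordered edges `(u,v)` with `u ∈ S`, `v ∈ T`, `uv ∈ E`. -/
def bipCount {n : ℕ} (G : SimpleGraph (Fin n)) [DecidableRel G.Adj]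
    (S T : Finset (Fin n)) : ℕ :=
  ((S ×ˢ T).filter (fun e => G.Adj e.1 e.2)).card

/-- The `α`-bipartite density condition. -/
def BipDensity {n : ℕ} (G : SimpleGraph (Fin n)) [DecidableRel G.Adj]
    (d : ℕ) (α : ℝ) : Prop :=
  ∀ S T : Finset (Fin n),
    (bipCount G S T : ℝ) ≤ d * S.card * T.card / n + α * Real.sqrt (S.card * T.card)

/-- The `δ`-small-set `α`-bipartite density condition. -/
def SmallSetBipDensity {n : ℕ} (G : SimpleGraph (Fin n)) [DecidableRel G.Adj]
    (d : ℕ) (α δ : ℝ) : Prop :=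
  ∀ S T : Finset (Fin n), (S.card : ℝ) ≤ δ * n → (T.card : ℝ) ≤ δ * n →
    (bipCount G S T : ℝ) ≤ d * S.card * T.card / n + α * Real.sqrt (S.card * T.card)


section Helpers
open Matrix

lemma adjSym {n : ℕ} {M : Matrix (Fin n) (Fin n) ℝ} (h : Mᵀ = M) (x y : Fin n → ℝ) :
    (M *ᵥ x) ⬝ᵥ y = x ⬝ᵥ (M *ᵥ y) := by
  rw [Matrix.dotProduct_mulVec, ← Matrix.mulVec_transpose, h]

lemma dotSelf_nonneg {n : ℕ} (x : Fin n → ℝ) : 0 ≤ x ⬝ᵥ x :=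
  Finset.sum_nonneg fun i _ => mul_self_nonneg _

/-- log-convexity growth: if ‖Mf‖² ≥ c²‖f‖² then ‖M^t f‖² ≥ c^{2t}‖f‖². -/
lemma pow_growth {n : ℕ} (M : Matrix (Fin n) (Fin n) ℝ) (hsym : Mᵀ = M)
    (f : Fin n → ℝ) (c : ℝ)
    (h1 : c ^ 2 * (f ⬝ᵥ f) ≤ (M *ᵥ f) ⬝ᵥ (M *ᵥ f)) (t : ℕ) :
    (c ^ 2) ^ t * (f ⬝ᵥ f) ≤ (M ^ t *ᵥ f) ⬝ᵥ (M ^ t *ᵥ f) := by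
  set b : ℕ → ℝ := fun k => (M ^ k *ᵥ f) ⬝ᵥ (M ^ k *ᵥ f) with hb
  have hsucc : ∀ k, M ^ (k+1) *ᵥ f = M *ᵥ (M ^ k *ᵥ f) := by
    intro k
    rw [Matrix.mulVec_mulVec, ← pow_succ']
  have hcs : ∀ k, b (k+1) ^ 2 ≤ b k * b (k+2) := by
    intro k
    have h2 : b (k+1) = (M ^ k *ᵥ f) ⬝ᵥ (M ^ (k+2) *ᵥ f) := by
      show (M ^ (k+1) *ᵥ f) ⬝ᵥ (M ^ (k+1) *ᵥ f) = _
      rw [hsucc k, adjSym hsym, Matrix.mulVec_mulVec, Matrix.mulVec_mulVec]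
      congr 2
      rw [mul_assoc, ← pow_succ', ← pow_succ']
    rw [h2]
    have := Finset.sum_mul_sq_le_sq_mul_sq Finset.univ (M ^ k *ᵥ f) (M ^ (k+2) *ᵥ f)
    calc ((M ^ k *ᵥ f) ⬝ᵥ (M ^ (k+2) *ᵥ f)) ^ 2
        ≤ (∑ i, (M ^ k *ᵥ f) i ^ 2) * ∑ i, (M ^ (k+2) *ᵥ f) i ^ 2 := this
      _ = b k * b (k+2) := by
          simp only [hb, dotProduct, sq]
  have step : ∀ k, c ^ 2 * b k ≤ b (k+1) := by
    intro k
    induction k with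
    | zero => simpa [hb] using h1
    | succ k ih =>
      rcases eq_or_lt_of_le (dotSelf_nonneg (M ^ k *ᵥ f)) with h0 | h0
      · have hz : b (k+1) = 0 := by
          have h2 := hcs k
          have hbk0 : b k = 0 := h0.symm
          have : b (k+1) ^ 2 ≤ 0 := by
            rw [hbk0] at h2
            simpa using h2
          nlinarith [sq_nonneg (b (k+1))]
        rw [hz]
        simpa using dotSelf_nonneg (M ^ (k+2) *ᵥ f)
      · have h2 := hcs k
        have hbk1 : 0 ≤ b (k+1) := dotSelf_nonneg _
        have hbk : (0:ℝ) < b k := h0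
        nlinarith [mul_le_mul_of_nonneg_left ih hbk1]
  induction t with
  | zero => simp
  | succ t ih =>
    calc (c ^ 2) ^ (t+1) * (f ⬝ᵥ f) = c ^ 2 * ((c ^ 2) ^ t * (f ⬝ᵥ f)) := by ring
    _ ≤ c ^ 2 * b t := by
        apply mul_le_mul_of_nonneg_left ih (sq_nonneg c)
    _ ≤ b (t+1) := step t

lemma stoch_pow {n : ℕ} {M : Matrix (Fin n) (Fin n) ℝ}
    (h0 : ∀ i j, 0 ≤ M i j) (h1 : ∀ i, ∑ j, M i j = 1) (t : ℕ) :
    (∀ i j, 0 ≤ (M ^ t) i j) ∧ ∀ i, ∑ j, (M ^ t) i j = 1 := by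
  induction t with
  | zero =>
    constructor
    · intro i j
      by_cases h : i = j <;> simp [Matrix.one_apply, h]
    · intro i
      simp [Matrix.one_apply]
  | succ t ih =>
    have hmul : M ^ (t+1) = M ^ t * M := pow_succ M t
    constructor
    · intro i j
      rw [hmul, Matrix.mul_apply]
      exact Finset.sum_nonneg fun k _ => mul_nonneg (ih.1 i k) (h0 k j)
    · intro i
      rw [hmul]
      simp only [Matrix.mul_apply]
      rw [Finset.sum_comm]
      calc ∑ k, ∑ j, (M ^ t) i k * M k j = ∑ k, (M ^ t) i k * ∑ j, M k j := by
            simp [Finset.mul_sum]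
        _ = 1 := by simp [h1, ih.2 i]

lemma mulVec_abs_le {n : ℕ} {M : Matrix (Fin n) (Fin n) ℝ}
    (h0 : ∀ i j, 0 ≤ M i j) (h1 : ∀ i, ∑ j, M i j = 1) {x : Fin n → ℝ}
    (hx : ∀ v, |x v| ≤ 1) (v : Fin n) : |(M *ᵥ x) v| ≤ 1 := by
  have : |(M *ᵥ x) v| ≤ ∑ j, M v j * |x j| := by
    have hrw : (M *ᵥ x) v = ∑ j, M v j * x j := rfl
    rw [hrw]
    refine le_trans (Finset.abs_sum_le_sum_abs _ _) ?_
    apply Finset.sum_le_sum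
    intro j _
    rw [abs_mul, abs_of_nonneg (h0 v j)]
  refine this.trans ?_
  calc ∑ j, M v j * |x j| ≤ ∑ j, M v j * 1 := by
        apply Finset.sum_le_sum
        intro j _
        exact mul_le_mul_of_nonneg_left (hx j) (h0 v j)
    _ = 1 := by simp [h1 v]

lemma mulVec_const {n : ℕ} {M : Matrix (Fin n) (Fin n) ℝ}
    (h1 : ∀ i, ∑ j, M i j = 1) : M *ᵥ (fun _ => (1:ℝ)) = fun _ => 1 := by
  funext v
  simp [Matrix.mulVec, dotProduct, h1 v]

section DChunk
variable {n d : ℕ} {G : SimpleGraph (Fin n)} [DecidableRel G.Adj]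

lemma walk_nonneg (i j : Fin n) : 0 ≤ walkMatrix G d i j := by
  simp only [walkMatrix, Matrix.smul_apply, smul_eq_mul, SimpleGraph.adjMatrix_apply]
  positivity

lemma walk_symm : (walkMatrix G d)ᵀ = walkMatrix G d := by
  simp [walkMatrix, Matrix.transpose_smul, SimpleGraph.transpose_adjMatrix]

lemma walk_rowsum (hreg : G.IsRegularOfDegree d) (hd : 0 < d) (i : Fin n) :
    ∑ j, walkMatrix G d i j = 1 := by
  have : ∑ j, (G.adjMatrix ℝ) i j = (d : ℝ) := by
    have := SimpleGraph.adjMatrix_mulVec_const_apply_of_regular (α := ℝ) (a := (1:ℝ)) hreg (v := i)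
    simpa [Matrix.mulVec, dotProduct] using this
  simp only [walkMatrix, Matrix.smul_apply, smul_eq_mul, ← Finset.mul_sum, this]
  field_simp

lemma walk_nonneg' : ∀ i j, 0 ≤ walkMatrix G d i j := walk_nonneg

end DChunk
section EChunk
variable {n d : ℕ} {G : SimpleGraph (Fin n)} [DecidableRel G.Adj] {S T : Finset (Fin n)}

lemma bipCount_symm : bipCount G S T = bipCount G T S := by
  unfold bipCount
  apply Finset.card_bij (fun e _ => Prod.swap e)
  · rintro ⟨u, v⟩ he
    simp only [Finset.mem_filter, Finset.mem_product] at he ⊢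
    exact ⟨⟨he.1.2, he.1.1⟩, he.2.symm⟩
  · exact fun _ _ _ _ h => Prod.swap_injective h
  · rintro ⟨u, v⟩ he
    refine ⟨⟨v, u⟩, ?_, rfl⟩
    simp only [Finset.mem_filter, Finset.mem_product] at he ⊢
    exact ⟨⟨he.1.2, he.1.1⟩, he.2.symm⟩

lemma bipCount_le : (bipCount G S T) ≤ ∑ u ∈ S, G.degree u := by
  unfold bipCount
  rw [Finset.card_filter, Finset.sum_product]
  apply Finset.sum_le_sum
  intro u _
  calc (∑ v ∈ T, if G.Adj u v then 1 else 0)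
      ≤ ∑ v : Fin n, if G.Adj u v then 1 else 0 := by
        apply Finset.sum_le_sum_of_subset_of_nonneg (Finset.subset_univ T)
        intro v _ _; positivity
    _ = G.degree u := by
        rw [← Finset.card_filter, SimpleGraph.degree, SimpleGraph.neighborFinset_eq_filter]

lemma indicator_dot_adj :
    (fun v => if v ∈ T then (1:ℝ) else 0) ⬝ᵥ
      (G.adjMatrix ℝ *ᵥ (fun v => if v ∈ S then (1:ℝ) else 0)) = bipCount G T S := by
  unfold bipCount
  rw [Finset.card_filter, Finset.sum_product]
  push_cast
  simp only [dotProduct, SimpleGraph.adjMatrix_mulVec_apply,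
    SimpleGraph.neighborFinset_eq_filter, Finset.sum_filter]
  calc ∑ x : Fin n, (if x ∈ T then (1:ℝ) else 0) *
          ∑ a : Fin n, (if G.Adj x a then (if a ∈ S then (1:ℝ) else 0) else 0)
      = ∑ x : Fin n, (if x ∈ T then
          (∑ a : Fin n, (if G.Adj x a then (if a ∈ S then (1:ℝ) else 0) else 0)) else 0) := by
        apply Finset.sum_congr rfl
        intro x _
        split_ifs <;> simp
    _ = ∑ x ∈ T, ∑ a : Fin n, (if G.Adj x a then (if a ∈ S then (1:ℝ) else 0) else 0) := by
        rw [Finset.sum_ite_mem, Finset.univ_inter]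
    _ = ∑ x ∈ T, ∑ a ∈ S, (if G.Adj x a then (1:ℝ) else 0) := by
        apply Finset.sum_congr rfl
        intro x _
        calc ∑ a : Fin n, (if G.Adj x a then (if a ∈ S then (1:ℝ) else 0) else 0)
            = ∑ a : Fin n, (if a ∈ S then (if G.Adj x a then (1:ℝ) else 0) else 0) := by
              apply Finset.sum_congr rfl
              intro a _
              split_ifs <;> rfl
          _ = ∑ a ∈ S, (if G.Adj x a then (1:ℝ) else 0) := by
              rw [Finset.sum_ite_mem, Finset.univ_inter]

end EChunk
section FChunk
variable {n d : ℕ} {G : SimpleGraph (Fin n)} [DecidableRel G.Adj] {S T : Finset (Fin n)}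

lemma ones_dot (x : Fin n → ℝ) : (fun _ => (1:ℝ)) ⬝ᵥ x = ∑ v, x v := by
  simp [dotProduct]

lemma dot_ones (x : Fin n → ℝ) : x ⬝ᵥ (fun _ => (1:ℝ)) = ∑ v, x v := by
  simp [dotProduct]

lemma indicator_sum : ∑ v, (if v ∈ S then (1:ℝ) else 0) = S.card := by
  simp

lemma centered_eq :
    (fun v => (if v ∈ S then (1:ℝ) else 0) - S.card / n) =
      (fun v => if v ∈ S then (1:ℝ) else 0) - ((S.card : ℝ) / n) • (fun _ => (1:ℝ)) := by
  funext v
  simp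

lemma centered_dot_self (hn : 0 < n) :
    (fun v => (if v ∈ S then (1:ℝ) else 0) - S.card / n) ⬝ᵥ
      (fun v => (if v ∈ S then (1:ℝ) else 0) - S.card / n) =
      S.card * (1 - S.card / n) := by
  have hm : (n:ℝ) ≠ 0 := Nat.cast_ne_zero.mpr hn.ne'
  have key : ∀ v : Fin n, ((if v ∈ S then (1:ℝ) else 0) - S.card / n) *
      ((if v ∈ S then (1:ℝ) else 0) - S.card / n) =
      (if v ∈ S then (1:ℝ) else 0) * (1 - 2 * (S.card / n)) + (S.card / n)^2 := by
    intro v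
    split_ifs <;> ring
  show (∑ v, _) = _
  simp only [dotProduct]
  rw [Finset.sum_congr rfl (fun v _ => key v), Finset.sum_add_distrib, ← Finset.sum_mul,
    _root_.indicator_sum]
  simp only [Finset.sum_const, Finset.card_univ, Fintype.card_fin, nsmul_eq_mul]
  field_simp
  ring

lemma walk_mulVec_ones (hreg : G.IsRegularOfDegree d) (hd : 0 < d) :
    walkMatrix G d *ᵥ (fun _ => (1:ℝ)) = fun _ => (1:ℝ) :=
  mulVec_const (walk_rowsum hreg hd)

lemma cross_dot (hreg : G.IsRegularOfDegree d) (hd : 0 < d) (hn : 0 < n) :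
    (fun v => (if v ∈ T then (1:ℝ) else 0) - T.card / n) ⬝ᵥ
      (walkMatrix G d *ᵥ (fun v => (if v ∈ S then (1:ℝ) else 0) - S.card / n)) =
      (bipCount G S T : ℝ) / d - S.card * T.card / n := by
  have hm : (n:ℝ) ≠ 0 := Nat.cast_ne_zero.mpr hn.ne'
  have hd' : (d:ℝ) ≠ 0 := Nat.cast_ne_zero.mpr hd.ne'
  set χS : Fin n → ℝ := fun v => if v ∈ S then (1:ℝ) else 0 with hχS
  set χT : Fin n → ℝ := fun v => if v ∈ T then (1:ℝ) else 0 with hχT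
  set ones : Fin n → ℝ := fun _ => (1:ℝ) with hones
  have h1 : walkMatrix G d *ᵥ ones = ones := walk_mulVec_ones hreg hd
  have hadj : ∀ x y : Fin n → ℝ,
      (walkMatrix G d *ᵥ x) ⬝ᵥ y = x ⬝ᵥ (walkMatrix G d *ᵥ y) := adjSym walk_symm
  have hTA : χT ⬝ᵥ (walkMatrix G d *ᵥ χS) = (d:ℝ)⁻¹ * bipCount G S T := by
    rw [show walkMatrix G d = (d:ℝ)⁻¹ • G.adjMatrix ℝ from rfl,
      Matrix.smul_mulVec, dotProduct_smul]
    rw [show ((d:ℝ)⁻¹ • (χT ⬝ᵥ (G.adjMatrix ℝ *ᵥ χS))) = (d:ℝ)⁻¹ * (χT ⬝ᵥ (G.adjMatrix ℝ *ᵥ χS)) from rfl]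
    rw [indicator_dot_adj, bipCount_symm]
  have honeS : ones ⬝ᵥ (walkMatrix G d *ᵥ χS) = S.card := by
    rw [← hadj, h1, ones_dot]
    exact indicator_sum
  have hTones : χT ⬝ᵥ ones = T.card := by
    rw [dot_ones]; exact indicator_sum
  have honeones : ones ⬝ᵥ ones = (n:ℝ) := by
    rw [dot_ones, hones]; simp
  rw [centered_eq (S := T), centered_eq (S := S)]
  rw [Matrix.mulVec_sub, Matrix.mulVec_smul, h1]
  rw [sub_dotProduct, smul_dotProduct, dotProduct_sub,
    dotProduct_sub, dotProduct_smul, dotProduct_smul]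
  rw [hTA, honeS, hTones, honeones]
  simp only [smul_eq_mul]
  field_simp
  ring
end FChunk
section Main
variable {n d : ℕ} {G : SimpleGraph (Fin n)} [DecidableRel G.Adj]

lemma dot_sq_le (x y : Fin n → ℝ) : (x ⬝ᵥ y)^2 ≤ (x ⬝ᵥ x) * (y ⬝ᵥ y) := by
  have := Finset.sum_mul_sq_le_sq_mul_sq Finset.univ x y
  simpa [dotProduct, sq] using this

lemma walkpow_symm (t : ℕ) : ((walkMatrix G d) ^ t)ᵀ = (walkMatrix G d) ^ t := by
  rw [Matrix.transpose_pow, walk_symm]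

lemma tv_le_one (hreg : G.IsRegularOfDegree d) (hd : 0 < d) (hn : 0 < n)
    (t : ℕ) {q : Fin n → ℝ} (hq : IsProbDist q) :
    tvFromUniform ((walkMatrix G d ^ t).mulVec q) ≤ 1 := by
  set W := walkMatrix G d with hW
  have hst := stoch_pow (M := W) walk_nonneg' (walk_rowsum hreg hd) t
  set y := (W ^ t) *ᵥ q with hy
  have hy0 : ∀ v, 0 ≤ y v := by
    intro v
    show 0 ≤ ∑ j, (W ^ t) v j * q j
    exact Finset.sum_nonneg fun j _ => mul_nonneg (hst.1 v j) (hq.1 j)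
  have hysum : ∑ v, y v = 1 := by
    have h1 : (W ^ t) *ᵥ (fun _ => (1:ℝ)) = fun _ => (1:ℝ) := mulVec_const hst.2
    calc ∑ v, y v = (fun _ => (1:ℝ)) ⬝ᵥ y := (ones_dot y).symm
      _ = ((W ^ t) *ᵥ (fun _ => (1:ℝ))) ⬝ᵥ q := by
          rw [adjSym (walkpow_symm t)]
      _ = 1 := by rw [h1, ones_dot, hq.2]
  show (1/2) * ∑ v, |y v - 1/(n:ℝ)| ≤ 1
  have hb : ∀ v, |y v - 1/(n:ℝ)| ≤ y v + 1/(n:ℝ) := by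
    intro v
    calc |y v - 1/(n:ℝ)| ≤ |y v| + |1/(n:ℝ)| := abs_sub _ _
      _ = y v + 1/(n:ℝ) := by
          rw [abs_of_nonneg (hy0 v), abs_of_nonneg (by positivity)]
  calc (1/2) * ∑ v, |y v - 1/(n:ℝ)| ≤ (1/2) * ∑ v, (y v + 1/(n:ℝ)) := by
        apply mul_le_mul_of_nonneg_left (Finset.sum_le_sum fun v _ => hb v) (by norm_num)
    _ ≤ (1/2) * (1 + 1) := by
        apply mul_le_mul_of_nonneg_left _ (by norm_num)
        rw [Finset.sum_add_distrib, hysum]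
        have : ∑ _v : Fin n, 1/(n:ℝ) = 1 := by
          rw [Finset.sum_const, Finset.card_univ, Fintype.card_fin, nsmul_eq_mul]
          field_simp
        rw [this]
    _ = 1 := by norm_num

set_option maxHeartbeats 2000000 in
lemma aux_bound (S T : Finset (Fin n)) (α : ℝ)
    (hreg : G.IsRegularOfDegree d)
    (hS : S.Nonempty) (hT : T.Nonempty) (hα : 0 < α) (hST : S.card ≤ T.card)
    (hdense : (d : ℝ) * S.card * T.card / n + α * Real.sqrt (S.card * T.card) ≤
      bipCount G S T) (t : ℕ) :
    (1 / 2) * (α / (2 * d)) ^ (2 * t) - (S.card : ℝ) / (2 * n) ≤ dTV G d t := by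
  classical
  obtain ⟨v0, _⟩ := hS
  have hSne : S.Nonempty := ⟨v0, by assumption⟩
  have hn : 0 < n := v0.pos
  have hm : (0:ℝ) < n := by exact_mod_cast hn
  have hs1 : (1:ℝ) ≤ S.card := by exact_mod_cast Finset.card_pos.mpr hSne
  have ht1 : (1:ℝ) ≤ T.card := by exact_mod_cast Finset.card_pos.mpr hT
  have hs0 : (0:ℝ) < S.card := by linarith
  have ht0 : (0:ℝ) < T.card := by linarith
  have hsm : (S.card:ℝ) ≤ n := by exact_mod_cast (Finset.card_le_univ S).trans_eq (by simp)
  have htm : (T.card:ℝ) ≤ n := by exact_mod_cast (Finset.card_le_univ T).trans_eq (by simp)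
  have hsqrtpos : 0 < Real.sqrt ((S.card:ℝ) * T.card) :=
    Real.sqrt_pos.mpr (by positivity)
  have hBle : (bipCount G S T : ℝ) ≤ d * S.card := by
    have h1 : bipCount G S T ≤ ∑ u ∈ S, G.degree u := bipCount_le
    have h2 : ∑ u ∈ S, G.degree u = S.card * d := by
      rw [Finset.sum_congr rfl fun u _ => hreg u, Finset.sum_const, smul_eq_mul]
    rw [h2] at h1
    calc (bipCount G S T : ℝ) ≤ ((S.card * d : ℕ) : ℝ) := by exact_mod_cast h1
      _ = d * S.card := by push_cast; ring
  have hd : 0 < d := by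
    rcases Nat.eq_zero_or_pos d with h0 | h
    · exfalso
      rw [h0] at hdense hBle
      push_cast at hdense hBle
      rw [zero_mul, zero_mul, zero_div, zero_add] at hdense
      rw [zero_mul] at hBle
      linarith [mul_pos hα hsqrtpos]
    · exact h
  have hdm : (0:ℝ) < d := by exact_mod_cast hd
  have hαd : α ≤ d := by
    have hstle : (S.card:ℝ) ≤ T.card := by exact_mod_cast hST
    have hsqs : (S.card:ℝ) ≤ Real.sqrt ((S.card:ℝ) * T.card) := by
      have h2 : ((S.card:ℝ))^2 ≤ (S.card:ℝ) * T.card := by nlinarith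
      calc (S.card:ℝ) = Real.sqrt (((S.card:ℝ))^2) := (Real.sqrt_sq hs0.le).symm
        _ ≤ Real.sqrt ((S.card:ℝ) * T.card) := Real.sqrt_le_sqrt h2
    have hpos2 : 0 < (d:ℝ) * S.card * T.card / n := by positivity
    have hkey : α * (S.card:ℝ) ≤ (d:ℝ) * S.card := by
      nlinarith [mul_le_mul_of_nonneg_left hsqs hα.le]
    nlinarith [hkey, hs0]
  set W := walkMatrix G d with hW
  set fS : Fin n → ℝ := fun v => (if v ∈ S then (1:ℝ) else 0) - S.card / n with hfS
  set gT : Fin n → ℝ := fun v => (if v ∈ T then (1:ℝ) else 0) - T.card / n with hgT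
  set c : ℝ := α / d with hc
  have hc0 : 0 < c := div_pos hα hdm
  have hc1 : c ≤ 1 := by rw [hc, div_le_one hdm]; exact hαd
  have hcross : gT ⬝ᵥ (W *ᵥ fS) = (bipCount G S T : ℝ) / d - S.card * T.card / n :=
    cross_dot hreg hd hn
  have hlow : c * Real.sqrt ((S.card:ℝ) * T.card) ≤ gT ⬝ᵥ (W *ᵥ fS) := by
    rw [hcross, hc]
    have e : α / (d:ℝ) * Real.sqrt ((S.card:ℝ) * T.card) =
        (α * Real.sqrt ((S.card:ℝ) * T.card)) / d := by ring
    have e2 : (bipCount G S T : ℝ)/d - (S.card:ℝ)*T.card/n =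
        ((bipCount G S T : ℝ) - (d:ℝ)*S.card*T.card/n)/d := by
      field_simp
    rw [e, e2, div_le_div_iff₀ hdm hdm]
    nlinarith [hdense, hdm]
  have htlt : (T.card:ℝ) < n := by
    by_contra hcon
    push_neg at hcon
    have heq : (T.card:ℝ) = n := le_antisymm htm hcon
    have e : (d:ℝ) * S.card * T.card / n = (d:ℝ) * S.card := by
      rw [heq]
      field_simp
    rw [e] at hdense
    nlinarith [mul_pos hα hsqrtpos]
  have hff : fS ⬝ᵥ fS = S.card * (1 - S.card / n) := centered_dot_self hn
  have hgg : gT ⬝ᵥ gT = T.card * (1 - T.card / n) := centered_dot_self hn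
  have hggpos : 0 < gT ⬝ᵥ gT := by
    rw [hgg]
    have h1 : 0 < 1 - (T.card:ℝ)/n := by
      rw [sub_pos, div_lt_one hm]; exact htlt
    exact mul_pos ht0 h1
  have hffnn : 0 ≤ fS ⬝ᵥ fS := dotSelf_nonneg fS
  have hstep : c ^ 2 * (fS ⬝ᵥ fS) ≤ (W *ᵥ fS) ⬝ᵥ (W *ᵥ fS) := by
    have hcs : (gT ⬝ᵥ (W *ᵥ fS))^2 ≤ (gT ⬝ᵥ gT) * ((W *ᵥ fS) ⬝ᵥ (W *ᵥ fS)) :=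
      dot_sq_le gT (W *ᵥ fS)
    have hsq : (c * Real.sqrt ((S.card:ℝ) * T.card))^2 = c^2 * (S.card * T.card) := by
      rw [mul_pow, Real.sq_sqrt (by positivity)]
    have h1 : c^2 * (fS ⬝ᵥ fS) * (gT ⬝ᵥ gT) ≤ c^2 * ((S.card:ℝ) * T.card) := by
      rw [hff, hgg]
      have e1 : 0 ≤ 1 - (S.card:ℝ)/n := by
        rw [sub_nonneg, div_le_one hm]; exact hsm
      have e2 : (S.card:ℝ) * (1 - S.card/n) ≤ S.card := by
        nlinarith [mul_nonneg hs0.le (div_nonneg hs0.le hm.le)]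
      have e3 : 0 ≤ 1 - (T.card:ℝ)/n := by
        rw [sub_nonneg, div_le_one hm]; exact htm
      have e4 : (T.card:ℝ) * (1 - T.card/n) ≤ T.card := by
        nlinarith [mul_nonneg ht0.le (div_nonneg ht0.le hm.le)]
      have n1 : 0 ≤ (S.card:ℝ) * (1 - S.card/n) := by positivity
      have n2 : 0 ≤ (T.card:ℝ) * (1 - T.card/n) := by positivity
      have hXY : (S.card:ℝ) * (1 - S.card/n) * ((T.card:ℝ) * (1 - T.card/n)) ≤
          (S.card:ℝ) * T.card := mul_le_mul e2 e4 n2 hs0.le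
      calc c^2 * ((S.card:ℝ) * (1 - S.card/n)) * ((T.card:ℝ) * (1 - T.card/n))
          = c^2 * ((S.card:ℝ) * (1 - S.card/n) * ((T.card:ℝ) * (1 - T.card/n))) := by ring
        _ ≤ c^2 * ((S.card:ℝ) * T.card) := mul_le_mul_of_nonneg_left hXY (sq_nonneg c)
    have h2 : (c * Real.sqrt ((S.card:ℝ) * T.card))^2 ≤ (gT ⬝ᵥ (W *ᵥ fS))^2 := by
      apply pow_le_pow_left₀ (by positivity) hlow
    have h3 : c^2 * (fS ⬝ᵥ fS) * (gT ⬝ᵥ gT) ≤ ((W *ᵥ fS) ⬝ᵥ (W *ᵥ fS)) * (gT ⬝ᵥ gT) := by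
      calc c^2 * (fS ⬝ᵥ fS) * (gT ⬝ᵥ gT) ≤ c^2 * ((S.card:ℝ) * T.card) := h1
        _ = (c * Real.sqrt ((S.card:ℝ) * T.card))^2 := hsq.symm
        _ ≤ (gT ⬝ᵥ (W *ᵥ fS))^2 := h2
        _ ≤ (gT ⬝ᵥ gT) * ((W *ᵥ fS) ⬝ᵥ (W *ᵥ fS)) := hcs
        _ = ((W *ᵥ fS) ⬝ᵥ (W *ᵥ fS)) * (gT ⬝ᵥ gT) := mul_comm _ _
    exact le_of_mul_le_mul_right h3 hggpos
  have hgrow : (c^2)^t * (fS ⬝ᵥ fS) ≤ ((W ^ t) *ᵥ fS) ⬝ᵥ ((W ^ t) *ᵥ fS) :=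
    pow_growth W walk_symm fS c hstep t
  -- ℓ∞ bound on W^t fS
  have hstoch := stoch_pow (M := W) walk_nonneg' (walk_rowsum hreg hd) t
  have hfbound : ∀ v, |fS v| ≤ 1 := by
    intro v
    have hrw : fS v = (if v ∈ S then (1:ℝ) else 0) - S.card / n := rfl
    rw [hrw]
    have h1 : 0 ≤ (S.card:ℝ)/n := by positivity
    have h2 : (S.card:ℝ)/n ≤ 1 := by rw [div_le_one hm]; exact hsm
    split_ifs <;> rw [abs_le] <;> constructor <;> linarith
  have habs : ∀ v, |((W ^ t) *ᵥ fS) v| ≤ 1 :=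
    mulVec_abs_le hstoch.1 hstoch.2 hfbound
  have hl1 : ((W ^ t) *ᵥ fS) ⬝ᵥ ((W ^ t) *ᵥ fS) ≤ ∑ v, |((W ^ t) *ᵥ fS) v| := by
    show (∑ v, ((W ^ t) *ᵥ fS) v * ((W ^ t) *ᵥ fS) v) ≤ _
    apply Finset.sum_le_sum
    intro v _
    calc ((W ^ t) *ᵥ fS) v * ((W ^ t) *ᵥ fS) v = |((W ^ t) *ᵥ fS) v| * |((W ^ t) *ᵥ fS) v| := by
          rw [← abs_mul, abs_mul_self]
      _ ≤ |((W ^ t) *ᵥ fS) v| * 1 := by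
          exact mul_le_mul_of_nonneg_left (habs v) (abs_nonneg _)
      _ = |((W ^ t) *ᵥ fS) v| := mul_one _
  -- the witness distribution
  set p : Fin n → ℝ := fun v => if v ∈ S then ((S.card:ℝ))⁻¹ else 0 with hp
  have hprob : IsProbDist p := by
    constructor
    · intro v
      have hrw : p v = if v ∈ S then ((S.card:ℝ))⁻¹ else 0 := rfl
      rw [hrw]
      split_ifs
      · positivity
      · exact le_refl 0
    · rw [hp]
      rw [Finset.sum_ite_mem, Finset.univ_inter, Finset.sum_const, nsmul_eq_mul]
      field_simp
  have hWones : (W ^ t) *ᵥ (fun _ => (1:ℝ)) = fun _ => (1:ℝ) := mulVec_const hstoch.2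
  have hq : ∀ v, ((W ^ t) *ᵥ p) v - 1/(n:ℝ) = (S.card:ℝ)⁻¹ * (((W ^ t) *ᵥ fS) v) := by
    have hpeq : p = (S.card:ℝ)⁻¹ • (fun v => if v ∈ S then (1:ℝ) else 0) := by
      funext v
      rw [hp]
      simp only [Pi.smul_apply, smul_eq_mul]
      split_ifs <;> simp
    have hfeq : fS = (fun v => if v ∈ S then (1:ℝ) else 0) - ((S.card:ℝ)/n) • (fun _ => (1:ℝ)) :=
      centered_eq
    intro v
    have e1 : (W ^ t) *ᵥ p = (S.card:ℝ)⁻¹ • ((W ^ t) *ᵥ (fun v => if v ∈ S then (1:ℝ) else 0)) := by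
      rw [hpeq, Matrix.mulVec_smul]
    have e2 : (W ^ t) *ᵥ fS = ((W ^ t) *ᵥ (fun v => if v ∈ S then (1:ℝ) else 0)) -
        ((S.card:ℝ)/n) • (fun _ => (1:ℝ)) := by
      rw [hfeq, Matrix.mulVec_sub, Matrix.mulVec_smul, hWones]
    rw [e1, e2]
    simp only [Pi.smul_apply, Pi.sub_apply, smul_eq_mul]
    have : (S.card:ℝ) ≠ 0 := hs0.ne'
    field_simp
  -- the tv value
  have htv : (1/2) * (S.card:ℝ)⁻¹ * (((W ^ t) *ᵥ fS) ⬝ᵥ ((W ^ t) *ᵥ fS)) ≤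
      tvFromUniform ((W ^ t) *ᵥ p) := by
    show _ ≤ (1/2) * ∑ v, |((W ^ t) *ᵥ p) v - 1/(n:ℝ)|
    have e3 : ∀ v, |((W ^ t) *ᵥ p) v - 1/(n:ℝ)| = (S.card:ℝ)⁻¹ * |((W ^ t) *ᵥ fS) v| := by
      intro v
      rw [hq v, abs_mul, abs_of_nonneg (by positivity)]
    rw [Finset.sum_congr rfl fun v _ => e3 v, ← Finset.mul_sum]
    rw [mul_assoc]
    apply mul_le_mul_of_nonneg_left _ (by norm_num)
    apply mul_le_mul_of_nonneg_left hl1 (by positivity)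
  -- assemble chain to dTV
  have hmem : tvFromUniform ((W ^ t) *ᵥ p) ∈
      {x : ℝ | ∃ q : Fin n → ℝ, IsProbDist q ∧
        x = tvFromUniform ((walkMatrix G d ^ t).mulVec q)} := ⟨p, hprob, rfl⟩
  have hbdd : BddAbove {x : ℝ | ∃ q : Fin n → ℝ, IsProbDist q ∧
      x = tvFromUniform ((walkMatrix G d ^ t).mulVec q)} := by
    refine ⟨1, ?_⟩
    rintro x ⟨q, hq', rfl⟩
    exact tv_le_one hreg hd hn t hq'
  have hdtv : tvFromUniform ((W ^ t) *ᵥ p) ≤ dTV G d t := le_csSup hbdd hmem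
  -- final numeric chain
  have hnum : (1 / 2) * (α / (2 * d)) ^ (2 * t) - (S.card : ℝ) / (2 * n) ≤
      (1/2) * (S.card:ℝ)⁻¹ * ((c^2)^t * (fS ⬝ᵥ fS)) := by
    rw [hff]
    have e1 : (α / (2*d)) = c/2 := by
      rw [hc, div_div, mul_comm]
    rw [e1]
    have e2 : (c/2)^(2*t) ≤ c^(2*t) := by
      apply pow_le_pow_left₀ (by positivity)
      linarith
    have e3 : c^(2*t) ≤ 1 := pow_le_one₀ hc0.le hc1
    have e4 : (c^2)^t = c^(2*t) := by rw [← pow_mul]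
    rw [e4]
    have expand : (1/2) * (S.card:ℝ)⁻¹ * (c^(2*t) * (S.card * (1 - S.card/n))) =
        (1/2) * c^(2*t) - c^(2*t) * (S.card / (2*n)) := by
      field_simp
    rw [expand]
    have hfrac : 0 ≤ (S.card:ℝ) / (2*n) := by positivity
    nlinarith [pow_nonneg hc0.le (2*t), mul_le_of_le_one_left hfrac e3]
  calc (1 / 2) * (α / (2 * d)) ^ (2 * t) - (S.card : ℝ) / (2 * n)
      ≤ (1/2) * (S.card:ℝ)⁻¹ * ((c^2)^t * (fS ⬝ᵥ fS)) := hnum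
    _ ≤ (1/2) * (S.card:ℝ)⁻¹ * (((W ^ t) *ᵥ fS) ⬝ᵥ ((W ^ t) *ᵥ fS)) := by
        apply mul_le_mul_of_nonneg_left hgrow (by positivity)
    _ ≤ tvFromUniform ((W ^ t) *ᵥ p) := htv
    _ ≤ dTV G d t := hdtv
end Main

end Helpers

/-- a dense bipartite structure lower-bounds the variation distance
at every even time `t`. -/
theorem variation_distance_lower_bound_of_dense_bipartite_structure
    (n d : ℕ) (G : SimpleGraph (Fin n)) [DecidableRel G.Adj]
    (S T : Finset (Fin n)) (α : ℝ)
    (hreg : G.IsRegularOfDegree d)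
    (hS : S.Nonempty) (hT : T.Nonempty) (hα : 0 < α)
    (hdense : (d : ℝ) * S.card * T.card / n + α * Real.sqrt (S.card * T.card) ≤
      bipCount G S T) :
    ∀ t : ℕ, Even t →
      (1 / 2) * (α / (2 * d)) ^ (2 * t) - (min S.card T.card : ℝ) / (2 * n) ≤
        dTV G d t := by
  intro t _
  rcases le_total S.card T.card with h | h
  · rw [min_eq_left (by exact_mod_cast h : (S.card:ℝ) ≤ T.card)]
    exact aux_bound S T α hreg hS hT hα h hdense t
  · rw [min_eq_right (by exact_mod_cast h : (T.card:ℝ) ≤ S.card)]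
    have hdense' : (d : ℝ) * T.card * S.card / n + α * Real.sqrt (T.card * S.card) ≤
        bipCount G T S := by
      have e1 : (d:ℝ) * T.card * S.card / n = (d:ℝ) * S.card * T.card / n := by ring
      have e2 : Real.sqrt ((T.card:ℝ) * S.card) = Real.sqrt ((S.card:ℝ) * T.card) := by
        rw [mul_comm]
      have e3 : bipCount G T S = bipCount G S T := bipCount_symm
      rw [e1, e2, e3]
      exact hdense
    exact aux_bound T S α hreg hT hS hα h hdense' t
end

section
/- Let G be a d-regular graph on n vertices, α > 0, and let S,T ⊆ V be nonempty sets satisfying |E(S,T)| ≥ d|S||T|/n + α·√(|S||T|) that are vertex-minimal for this property, i.e., for every v ∈ S one has |E(S∖{v},T)| < d·(|S|−1)·|T|/n + α·√((|S|−1)·|T|), and for every u ∈ T one has |E(S,T∖{u})| < d·|S|·(|T|−1)/n + α·√(|S|·(|T|−1)). Then every v ∈ S has at least (α/2)·√(|T|/|S|) neighbours in T, every u ∈ T has at least (α/2)·√(|S|/|T|) neighbours in S, and consequently (α²/(4d²))·|T| ≤ |S| ≤ (4d²/α²)·|T|. -/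
open Finset

lemma bipCount_eq_sum_left {n : ℕ} (G : SimpleGraph (Fin n)) [DecidableRel G.Adj]
    (S T : Finset (Fin n)) :
    bipCount G S T = ∑ v ∈ S, (T.filter (fun u => G.Adj v u)).card := by
  unfold bipCount
  rw [Finset.card_filter, Finset.sum_product]
  simp only [Finset.card_filter]

lemma bipCount_eq_sum_right {n : ℕ} (G : SimpleGraph (Fin n)) [DecidableRel G.Adj]
    (S T : Finset (Fin n)) :
    bipCount G S T = ∑ u ∈ T, (S.filter (fun v => G.Adj u v)).card := by
  unfold bipCount
  rw [Finset.card_filter, Finset.sum_product, Finset.sum_comm]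
  simp only [Finset.card_filter]
  refine Finset.sum_congr rfl fun u _ => Finset.sum_congr rfl fun v _ => by
    exact if_congr (G.adj_comm v u) rfl rfl

lemma bipCount_comm {n : ℕ} (G : SimpleGraph (Fin n)) [DecidableRel G.Adj]
    (S T : Finset (Fin n)) : bipCount G S T = bipCount G T S := by
  rw [bipCount_eq_sum_right, bipCount_eq_sum_left]

lemma sqrt_gap (s t : ℝ) (hs : 1 ≤ s) (ht : 0 ≤ t) :
    (1/2) * Real.sqrt (t / s) ≤ Real.sqrt (s*t) - Real.sqrt ((s-1)*t) := by
  have hs0 : (0:ℝ) < s := by linarith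
  have ha : 0 < Real.sqrt s := Real.sqrt_pos.mpr hs0
  have hb : 0 ≤ Real.sqrt (s-1) := Real.sqrt_nonneg _
  have hab : Real.sqrt (s-1) ≤ Real.sqrt s := Real.sqrt_le_sqrt (by linarith)
  have h1 : Real.sqrt s * Real.sqrt s = s := Real.mul_self_sqrt hs0.le
  have h2 : Real.sqrt (s-1) * Real.sqrt (s-1) = s - 1 := Real.mul_self_sqrt (by linarith)
  have key : 1/(2*Real.sqrt s) ≤ Real.sqrt s - Real.sqrt (s-1) := by
    rw [div_le_iff₀ (by linarith)]
    nlinarith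
  rw [Real.sqrt_mul hs0.le, Real.sqrt_mul (by linarith : (0:ℝ) ≤ s-1),
    Real.sqrt_div ht]
  have hq : 0 ≤ Real.sqrt t := Real.sqrt_nonneg t
  have := mul_le_mul_of_nonneg_right key hq
  calc (1/2) * (Real.sqrt t / Real.sqrt s) = 1/(2*Real.sqrt s) * Real.sqrt t := by
        field_simp
    _ ≤ (Real.sqrt s - Real.sqrt (s-1)) * Real.sqrt t := this
    _ = Real.sqrt s * Real.sqrt t - Real.sqrt (s-1) * Real.sqrt t := by ring

lemma aux_deg {n : ℕ} (d : ℕ) (G : SimpleGraph (Fin n)) [DecidableRel G.Adj]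
    (S T : Finset (Fin n)) (α : ℝ) (hS : S.Nonempty) (hα : 0 < α)
    (hdense : (d : ℝ) * S.card * T.card / n + α * Real.sqrt (S.card * T.card) ≤
      bipCount G S T)
    (hmin : ∀ v ∈ S, (bipCount G (S.erase v) T : ℝ) <
      d * (S.card - 1) * T.card / n + α * Real.sqrt ((S.card - 1) * T.card)) :
    ∀ v ∈ S, (α / 2) * Real.sqrt (T.card / S.card) ≤
      ((T.filter (fun u => G.Adj v u)).card : ℝ) := by
  intro v hv
  have hn : 0 < n := (v : Fin n).pos
  have hs1 : (1:ℝ) ≤ S.card := by exact_mod_cast hS.card_pos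
  have ht0 : (0:ℝ) ≤ T.card := Nat.cast_nonneg _
  have hsplit : (bipCount G S T : ℝ) =
      bipCount G (S.erase v) T + ((T.filter (fun u => G.Adj v u)).card : ℝ) := by
    have : bipCount G S T =
        (T.filter (fun u => G.Adj v u)).card + bipCount G (S.erase v) T := by
      rw [bipCount_eq_sum_left, bipCount_eq_sum_left]
      exact (Finset.add_sum_erase S _ hv).symm
    rw [this]; push_cast; ring
  have h1 := hmin v hv
  have h2 : (d:ℝ)*(S.card-1)*T.card/n ≤ (d:ℝ)*S.card*T.card/n := by
    have hnum : (d:ℝ)*((S.card:ℝ)-1)*T.card ≤ (d:ℝ)*S.card*T.card := by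
      nlinarith [Nat.cast_nonneg (α := ℝ) d]
    rw [div_eq_mul_inv, div_eq_mul_inv]
    exact mul_le_mul_of_nonneg_right hnum (by positivity)
  have h3 := sqrt_gap (S.card) (T.card) hs1 ht0
  have h4 : α/2 * Real.sqrt ((T.card:ℝ)/S.card) ≤
      α * Real.sqrt ((S.card:ℝ)*T.card) - α * Real.sqrt (((S.card:ℝ)-1)*T.card) := by
    nlinarith [h3]
  linarith [hdense, h1, h2, h4, hsplit.le, hsplit.ge]

/-- vertex-minimal dense bipartite pairs have large minimum degree
across the pair, and comparable sizes. -/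
theorem min_degree_of_minimal_dense_bipartite_pair
    (n d : ℕ) (G : SimpleGraph (Fin n)) [DecidableRel G.Adj]
    (S T : Finset (Fin n)) (α : ℝ)
    (hreg : G.IsRegularOfDegree d)
    (hS : S.Nonempty) (hT : T.Nonempty) (hα : 0 < α)
    (hdense : (d : ℝ) * S.card * T.card / n + α * Real.sqrt (S.card * T.card) ≤
      bipCount G S T)
    (hminS : ∀ v ∈ S, (bipCount G (S.erase v) T : ℝ) <
      d * (S.card - 1) * T.card / n + α * Real.sqrt ((S.card - 1) * T.card))
    (hminT : ∀ u ∈ T, (bipCount G S (T.erase u) : ℝ) <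
      d * S.card * (T.card - 1) / n + α * Real.sqrt (S.card * (T.card - 1))) :
    (∀ v ∈ S, (α / 2) * Real.sqrt (T.card / S.card) ≤
        ((T.filter (fun u => G.Adj v u)).card : ℝ)) ∧
    (∀ u ∈ T, (α / 2) * Real.sqrt (S.card / T.card) ≤
        ((S.filter (fun v => G.Adj u v)).card : ℝ)) ∧
    (α ^ 2 / (4 * d ^ 2)) * T.card ≤ (S.card : ℝ) ∧
    (S.card : ℝ) ≤ (4 * d ^ 2 / α ^ 2) * T.card := by
  have hu0 := hT
  obtain ⟨u0, hu0m⟩ := hT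
  obtain ⟨v0, hv0m⟩ := hS
  have hn : 0 < n := v0.pos
  have hs1 : (1:ℝ) ≤ S.card := by exact_mod_cast Finset.card_pos.mpr ⟨v0, hv0m⟩
  have ht1 : (1:ℝ) ≤ T.card := by exact_mod_cast Finset.card_pos.mpr ⟨u0, hu0m⟩
  have partS : ∀ v ∈ S, (α / 2) * Real.sqrt (T.card / S.card) ≤
      ((T.filter (fun u => G.Adj v u)).card : ℝ) :=
    aux_deg d G S T α ⟨v0, hv0m⟩ hα hdense hminS
  have hdense' : (d : ℝ) * T.card * S.card / n + α * Real.sqrt (T.card * S.card) ≤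
      bipCount G T S := by
    rw [← bipCount_comm, mul_comm ((T.card:ℝ)) ((S.card:ℝ))]
    calc (d : ℝ) * T.card * S.card / n + α * Real.sqrt (S.card * T.card)
        = (d : ℝ) * S.card * T.card / n + α * Real.sqrt (S.card * T.card) := by ring_nf
      _ ≤ bipCount G S T := hdense
  have hminT' : ∀ u ∈ T, (bipCount G (T.erase u) S : ℝ) <
      d * (T.card - 1) * S.card / n + α * Real.sqrt ((T.card - 1) * S.card) := by
    intro u hu
    rw [← bipCount_comm, mul_comm ((T.card:ℝ) - 1) ((S.card:ℝ))]
    calc (bipCount G S (T.erase u) : ℝ)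
        < d * S.card * (T.card - 1) / n + α * Real.sqrt (S.card * (T.card - 1)) :=
          hminT u hu
      _ = d * (T.card - 1) * S.card / n + α * Real.sqrt (S.card * (T.card - 1)) := by
          ring_nf
  have partT : ∀ u ∈ T, (α / 2) * Real.sqrt (S.card / T.card) ≤
      ((S.filter (fun v => G.Adj u v)).card : ℝ) :=
    aux_deg d G T S α ⟨u0, hu0m⟩ hα hdense' hminT'
  -- degree bounds: filtered neighbourhoods have size ≤ d
  have hdegle : ∀ v : Fin n, ∀ W : Finset (Fin n),
      ((W.filter (fun u => G.Adj v u)).card : ℝ) ≤ d := by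
    intro v W
    have hsub : W.filter (fun u => G.Adj v u) ⊆ G.neighborFinset v := by
      intro u hu
      rw [SimpleGraph.mem_neighborFinset]
      exact (Finset.mem_filter.mp hu).2
    have := Finset.card_le_card hsub
    rw [SimpleGraph.card_neighborFinset_eq_degree, hreg v] at this
    exact_mod_cast this
  have hs0 : (0:ℝ) < S.card := by linarith
  have ht0 : (0:ℝ) < T.card := by linarith
  have hsqS : (0:ℝ) < Real.sqrt (T.card / S.card) :=
    Real.sqrt_pos.mpr (by positivity)
  have hsqT : (0:ℝ) < Real.sqrt (S.card / T.card) :=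
    Real.sqrt_pos.mpr (by positivity)
  have hd1 : (α / 2) * Real.sqrt (T.card / S.card) ≤ d :=
    le_trans (partS v0 hv0m) (hdegle v0 T)
  have hd2 : (α / 2) * Real.sqrt (S.card / T.card) ≤ d :=
    le_trans (partT u0 hu0m) (hdegle u0 S)
  have hdpos : (0:ℝ) < d := lt_of_lt_of_le (by positivity) hd1
  have hsq1 : Real.sqrt (T.card / S.card) ^ 2 = (T.card : ℝ) / S.card :=
    Real.sq_sqrt (by positivity)
  have hsq2 : Real.sqrt (S.card / T.card) ^ 2 = (S.card : ℝ) / T.card :=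
    Real.sq_sqrt (by positivity)
  have key1 : α ^ 2 * T.card ≤ 4 * d ^ 2 * S.card := by
    have h := mul_le_mul hd1 hd1 (by positivity) (Nat.cast_nonneg d)
    have h2 : α ^ 2 * ((T.card:ℝ) / S.card) ≤ 4 * d ^ 2 := by nlinarith [hsq1]
    have h3 : (α ^ 2 * T.card) / S.card ≤ 4 * (d:ℝ) ^ 2 := by
      rw [mul_div_assoc]; exact h2
    exact (div_le_iff₀ hs0).mp h3
  have key2 : α ^ 2 * S.card ≤ 4 * d ^ 2 * T.card := by
    have h := mul_le_mul hd2 hd2 (by positivity) (Nat.cast_nonneg d)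
    have h2 : α ^ 2 * ((S.card:ℝ) / T.card) ≤ 4 * d ^ 2 := by nlinarith [hsq2]
    have h3 : (α ^ 2 * S.card) / T.card ≤ 4 * (d:ℝ) ^ 2 := by
      rw [mul_div_assoc]; exact h2
    exact (div_le_iff₀ ht0).mp h3
  refine ⟨partS, partT, ?_, ?_⟩
  · have h4 : (0:ℝ) < 4 * (d:ℝ) ^ 2 := by nlinarith [hdpos]
    rw [div_mul_eq_mul_div, div_le_iff₀ h4]
    linarith [key1]
  · have h4 : (0:ℝ) < α ^ 2 := by positivity
    rw [div_mul_eq_mul_div, le_div_iff₀ h4]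
    linarith [key2]
end

section
/- Let G be a d-regular graph on n vertices, let S,T ⊆ V be nonempty, and let θ ∈ [0,d] be a real number such that every vertex of S has at least θ neighbours in T and every vertex of T has at least θ neighbours in S. Let U_S be the uniform probability distribution on S. Then for every natural number t: if t is even, (P^t U_S)(v) ≥ (θ/d)^t / |S| for every v ∈ S; and if t is odd, (P^t U_S)(u) ≥ (θ/d)^t / |S| for every u ∈ T. -/
open Finset

lemma walkMatrix_mulVec_nonneg {n d : ℕ} (G : SimpleGraph (Fin n)) [DecidableRel G.Adj]
    (q : Fin n → ℝ) (hq : ∀ w, 0 ≤ q w) (v : Fin n) :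
    0 ≤ (walkMatrix G d).mulVec q v := by
  unfold walkMatrix
  rw [Matrix.smul_mulVec]
  simp only [Pi.smul_apply, smul_eq_mul]
  have : 0 ≤ (G.adjMatrix ℝ).mulVec q v := by
    rw [Matrix.mulVec]
    refine Finset.sum_nonneg fun w _ => ?_
    exact mul_nonneg (by simp only [SimpleGraph.adjMatrix_apply]; split <;> norm_num) (hq w)
  positivity

lemma walkMatrix_step {n d : ℕ} (G : SimpleGraph (Fin n)) [DecidableRel G.Adj]
    (A B : Finset (Fin n)) (θ c : ℝ) (hc : 0 ≤ c)
    (h : ∀ v ∈ A, θ ≤ ((B.filter (fun u => G.Adj v u)).card : ℝ))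
    (q : Fin n → ℝ) (hq : ∀ w, 0 ≤ q w) (hqB : ∀ u ∈ B, c ≤ q u) :
    ∀ v ∈ A, (θ / d) * c ≤ (walkMatrix G d).mulVec q v := by
  intro v hv
  unfold walkMatrix
  rw [Matrix.smul_mulVec]
  simp only [Pi.smul_apply, smul_eq_mul]
  have hsum : θ * c ≤ (G.adjMatrix ℝ).mulVec q v := by
    rw [SimpleGraph.adjMatrix_mulVec_apply]
    have hsub : B.filter (fun u => G.Adj v u) ⊆ G.neighborFinset v := by
      intro u hu
      simp only [Finset.mem_filter] at hu
      simpa using hu.2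
    calc θ * c ≤ ((B.filter (fun u => G.Adj v u)).card : ℝ) * c :=
          mul_le_mul_of_nonneg_right (h v hv) hc
      _ = ∑ u ∈ B.filter (fun u => G.Adj v u), c := by
          rw [Finset.sum_const, nsmul_eq_mul]
      _ ≤ ∑ u ∈ B.filter (fun u => G.Adj v u), q u := by
          refine Finset.sum_le_sum fun u hu => ?_
          exact hqB u (Finset.mem_filter.1 hu).1
      _ ≤ ∑ u ∈ G.neighborFinset v, q u :=
          Finset.sum_le_sum_of_subset_of_nonneg hsub (fun u _ _ => hq u)
  have hd : (0:ℝ) ≤ (d:ℝ)⁻¹ := by positivity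
  calc (θ / d) * c = (d:ℝ)⁻¹ * (θ * c) := by ring
    _ ≤ (d:ℝ)⁻¹ * (G.adjMatrix ℝ).mulVec q v := mul_le_mul_of_nonneg_left hsum hd

/-- random walks started uniformly on `S` bounce between `S` and `T`
with pointwise mass at least `(θ/d)^t / |S|`. -/
theorem walk_bounces_between_dense_pair
    (n d : ℕ) (G : SimpleGraph (Fin n)) [DecidableRel G.Adj]
    (S T : Finset (Fin n)) (θ : ℝ)
    (hreg : G.IsRegularOfDegree d)
    (hS : S.Nonempty) (hT : T.Nonempty)
    (hθ0 : 0 ≤ θ) (hθd : θ ≤ d)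
    (hST : ∀ v ∈ S, θ ≤ ((T.filter (fun u => G.Adj v u)).card : ℝ))
    (hTS : ∀ u ∈ T, θ ≤ ((S.filter (fun v => G.Adj u v)).card : ℝ)) :
    ∀ t : ℕ,
      (Even t → ∀ v ∈ S,
        (θ / d) ^ t / S.card ≤
          (walkMatrix G d ^ t).mulVec (fun w => if w ∈ S then (S.card : ℝ)⁻¹ else 0) v) ∧
      (Odd t → ∀ u ∈ T,
        (θ / d) ^ t / S.card ≤
          (walkMatrix G d ^ t).mulVec (fun w => if w ∈ S then (S.card : ℝ)⁻¹ else 0) u) := by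
  set p₀ : Fin n → ℝ := fun w => if w ∈ S then (S.card : ℝ)⁻¹ else 0 with hp₀
  have hθd' : 0 ≤ θ / d := by positivity
  have hScard : (0:ℝ) < S.card := by
    exact_mod_cast Finset.card_pos.2 hS
  have hcnn : ∀ t : ℕ, 0 ≤ (θ / d) ^ t / S.card := fun t => by positivity
  suffices H : ∀ t : ℕ, (∀ w, 0 ≤ (walkMatrix G d ^ t).mulVec p₀ w) ∧
      (Even t → ∀ v ∈ S, (θ / d) ^ t / S.card ≤ (walkMatrix G d ^ t).mulVec p₀ v) ∧
      (Odd t → ∀ u ∈ T, (θ / d) ^ t / S.card ≤ (walkMatrix G d ^ t).mulVec p₀ u) by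
    intro t; exact ⟨(H t).2.1, (H t).2.2⟩
  intro t
  induction t with
  | zero =>
    refine ⟨fun w => ?_, fun _ v hv => ?_, fun h => absurd h (by simp)⟩
    · simp only [pow_zero, Matrix.one_mulVec, hp₀]
      split <;> positivity
    · simp only [pow_zero, Matrix.one_mulVec, hp₀, if_pos hv, pow_zero]
      rw [one_div]
  | succ t ih =>
    obtain ⟨hnn, hEv, hOd⟩ := ih
    have hrw : (walkMatrix G d ^ (t+1)).mulVec p₀ =
        (walkMatrix G d).mulVec ((walkMatrix G d ^ t).mulVec p₀) := by
      rw [pow_succ', Matrix.mulVec_mulVec]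
    have hnn' : ∀ w, 0 ≤ (walkMatrix G d ^ (t+1)).mulVec p₀ w := by
      intro w; rw [hrw]; exact walkMatrix_mulVec_nonneg G _ hnn w
    have hc' : (θ / d) ^ (t+1) / S.card = (θ / d) * ((θ / d) ^ t / S.card) := by
      rw [pow_succ']; ring
    refine ⟨hnn', fun he v hv => ?_, fun ho u hu => ?_⟩
    · have ho : Odd t := Nat.not_even_iff_odd.mp (Nat.even_add_one.mp he)
      rw [hrw, hc']
      exact walkMatrix_step G S T θ _ (hcnn t) hST _ hnn (hOd ho) v hv
    · have he : Even t := Nat.not_odd_iff_even.mp (Nat.odd_add_one.mp ho)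
      rw [hrw, hc']
      exact walkMatrix_step G T S θ _ (hcnn t) hTS _ hnn (hEv he) u hu
end

section
/- Let G be a d-regular graph on n vertices satisfying the δ-small-set α-bipartite density condition for some α ∈ (√d, d] and δ ∈ (0,1] with δn ≥ 1. Let p be a probability distribution on V and let p_{(1)} ≥ p_{(2)} ≥ ⋯ ≥ p_{(n)} denote its entries arranged in non-increasing order. Then for every nonempty set K ⊆ V with |K| ≤ δn, Σ_{u∈K} (Pp)(u) ≤ |K|/n + (α/d)·√(|K|/(δn)) + (α/d)·√|K| · Σ_{i=1}^{n} p_{(i)}/√i. -/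
open Finset

set_option maxHeartbeats 1000000

section helpers

variable {n : ℕ} (G : SimpleGraph (Fin n)) [DecidableRel G.Adj]

lemma bipCount_eq_sum (S T : Finset (Fin n)) :
    bipCount G S T = ∑ u ∈ S, (T.filter (fun v => G.Adj u v)).card := by
  rw [bipCount, Finset.card_filter, Finset.sum_product]
  exact Finset.sum_congr rfl (fun u _ => (Finset.card_filter _ _).symm)

lemma bipCount_le_card_mul (S T : Finset (Fin n)) :
    bipCount G S T ≤ S.card * T.card := by
  rw [bipCount]
  calc ((S ×ˢ T).filter (fun e => G.Adj e.1 e.2)).card ≤ (S ×ˢ T).card :=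
        Finset.card_le_card (Finset.filter_subset _ _)
    _ = S.card * T.card := Finset.card_product _ _

lemma bipCount_le_reg {d : ℕ} (hreg : G.IsRegularOfDegree d) (S T : Finset (Fin n)) :
    bipCount G S T ≤ d * T.card := by
  have h1 : bipCount G S T ≤ bipCount G univ T := by
    apply Finset.card_le_card
    apply Finset.filter_subset_filter
    exact Finset.product_subset_product (Finset.subset_univ S) (le_refl T)
  refine h1.trans ?_
  rw [bipCount, Finset.card_filter, Finset.sum_product, Finset.sum_comm]
  have hdeg : ∀ v ∈ T, (∑ u : Fin n, if G.Adj u v then 1 else 0) = d := by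
    intro v _
    rw [← Finset.card_filter]
    have hfe : (univ.filter fun u => G.Adj u v) = G.neighborFinset v := by
      rw [SimpleGraph.neighborFinset_eq_filter]
      apply Finset.filter_congr
      intro x _
      simp [G.adj_comm]
    rw [hfe]
    exact hreg v
  rw [Finset.sum_congr rfl hdeg, Finset.sum_const, smul_eq_mul, mul_comm]

end helpers

lemma sqrt_le_of_sq {x y : ℝ} (hy : 0 ≤ y) (h : x ≤ y ^ 2) : Real.sqrt x ≤ y := by
  calc Real.sqrt x ≤ Real.sqrt (y ^ 2) := Real.sqrt_le_sqrt h
    _ = y := Real.sqrt_sq hy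

lemma sqrt_le_sum_inv_sqrt : ∀ i : ℕ, Real.sqrt (i : ℝ) ≤ ∑ j ∈ range i, 1 / Real.sqrt ((j : ℝ) + 1) := by
  intro i
  induction i with
  | zero => simp
  | succ i ih =>
    rw [Finset.sum_range_succ]
    have hpos : 0 < Real.sqrt ((i : ℝ) + 1) := Real.sqrt_pos.2 (by positivity)
    have hs : Real.sqrt ((i : ℝ) + 1) ^ 2 = (i : ℝ) + 1 := Real.sq_sqrt (by positivity)
    have h2 : (i : ℝ) ≤ Real.sqrt (i : ℝ) * Real.sqrt ((i : ℝ) + 1) := by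
      rw [← Real.sqrt_mul (by positivity)]
      calc (i : ℝ) = Real.sqrt ((i : ℝ) ^ 2) := (Real.sqrt_sq (by positivity)).symm
        _ ≤ _ := Real.sqrt_le_sqrt (by nlinarith)
    have key : Real.sqrt ((i : ℝ) + 1) - Real.sqrt (i : ℝ) ≤ 1 / Real.sqrt ((i : ℝ) + 1) := by
      rw [le_div_iff₀ hpos]
      nlinarith
    push_cast
    linarith

lemma sqrt_split (s m : ℕ) : Real.sqrt (s : ℝ) ≤ ((s / m : ℕ) : ℝ) * Real.sqrt (m : ℝ) + Real.sqrt ((s % m : ℕ) : ℝ) := by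
  apply sqrt_le_of_sq (by positivity)
  have e1 : Real.sqrt ((m : ℝ)) ^ 2 = (m : ℝ) := Real.sq_sqrt (by positivity)
  have e2 : Real.sqrt (((s % m : ℕ)) : ℝ) ^ 2 = ((s % m : ℕ) : ℝ) := Real.sq_sqrt (by positivity)
  have e3 : (s : ℝ) = (m : ℝ) * ((s / m : ℕ) : ℝ) + ((s % m : ℕ) : ℝ) := by
    exact_mod_cast congrArg (Nat.cast : ℕ → ℝ) (Nat.div_add_mod s m).symm
  have hq : (0 : ℝ) ≤ ((s / m : ℕ) : ℝ) := Nat.cast_nonneg _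
  have hqq : ((s / m : ℕ) : ℝ) ≤ ((s / m : ℕ) : ℝ) ^ 2 := by
    rcases Nat.eq_zero_or_pos (s / m) with h | h
    · simp [h]
    · have h1 : (1 : ℝ) ≤ ((s / m : ℕ) : ℝ) := by exact_mod_cast h
      nlinarith
  nlinarith [Real.sqrt_nonneg ((m : ℝ)), Real.sqrt_nonneg (((s % m : ℕ)) : ℝ),
    mul_nonneg (mul_nonneg hq (Real.sqrt_nonneg ((m : ℝ)))) (Real.sqrt_nonneg (((s % m : ℕ)) : ℝ)),
    mul_le_mul_of_nonneg_right hqq (Nat.cast_nonneg m : (0:ℝ) ≤ (m:ℝ))]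

/-- Abel-type comparison. -/
lemma abel_aux (a ω bf : ℕ → ℝ) (ha : ∀ i j : ℕ, i ≤ j → a j ≤ a i) (ha0 : ∀ i, 0 ≤ a i) :
    ∀ N : ℕ, (∀ i, i ≤ N → ∑ j ∈ range i, ω j ≤ ∑ j ∈ range i, bf j) →
      ∑ i ∈ range N, a i * (ω i - bf i) ≤ a N * ∑ j ∈ range N, (ω j - bf j) := by
  intro N
  induction N with
  | zero => simp
  | succ N ih =>
    intro hW
    have ihh := ih (fun i hi => hW i (hi.trans (Nat.le_succ N)))
    rw [Finset.sum_range_succ, Finset.sum_range_succ (fun j => ω j - bf j)]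
    have hD : ∑ j ∈ range N, (ω j - bf j) + (ω N - bf N) ≤ 0 := by
      have h1 := hW (N + 1) le_rfl
      rw [Finset.sum_range_succ, Finset.sum_range_succ (fun j => bf j)] at h1
      have h2 : ∑ j ∈ range N, (ω j - bf j) = ∑ j ∈ range N, ω j - ∑ j ∈ range N, bf j :=
        Finset.sum_sub_distrib _ _
      linarith
    have hstep : a N * ∑ j ∈ range N, (ω j - bf j) + a N * (ω N - bf N)
        ≤ a (N + 1) * (∑ j ∈ range N, (ω j - bf j) + (ω N - bf N)) := by
      have h1 : a (N + 1) ≤ a N := ha N (N + 1) (Nat.le_succ N)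
      nlinarith [hD, mul_le_mul_of_nonpos_right h1 hD]
    calc ∑ i ∈ range N, a i * (ω i - bf i) + a N * (ω N - bf N)
        ≤ a N * ∑ j ∈ range N, (ω j - bf j) + a N * (ω N - bf N) := by linarith
      _ ≤ _ := hstep

lemma abel_le (a ω bf : ℕ → ℝ) (N : ℕ) (ha : ∀ i j : ℕ, i ≤ j → a j ≤ a i) (ha0 : ∀ i, 0 ≤ a i)
    (hW : ∀ i, i ≤ N → ∑ j ∈ range i, ω j ≤ ∑ j ∈ range i, bf j) :
    ∑ i ∈ range N, a i * ω i ≤ ∑ i ∈ range N, a i * bf i := by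
  have h1 := abel_aux a ω bf ha ha0 N hW
  have hD : ∑ j ∈ range N, (ω j - bf j) ≤ 0 := by
    have h2 := hW N le_rfl
    have h3 : ∑ j ∈ range N, (ω j - bf j) = ∑ j ∈ range N, ω j - ∑ j ∈ range N, bf j :=
      Finset.sum_sub_distrib _ _
    linarith
  have h4 : a N * ∑ j ∈ range N, (ω j - bf j) ≤ 0 := mul_nonpos_of_nonneg_of_nonpos (ha0 N) hD
  have h5 : ∑ i ∈ range N, a i * (ω i - bf i)
      = ∑ i ∈ range N, a i * ω i - ∑ i ∈ range N, a i * bf i := by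
    rw [← Finset.sum_sub_distrib]
    exact Finset.sum_congr rfl (fun i _ => by ring)
  linarith

/-- Covering bound. -/
lemma cover_bound {n d : ℕ} (G : SimpleGraph (Fin n)) [DecidableRel G.Adj]
    {α δ : ℝ} (hα0 : 0 ≤ α) (hcond : SmallSetBipDensity G d α δ)
    (K : Finset (Fin n)) (hK : (K.card : ℝ) ≤ δ * n)
    (m : ℕ) (hm1 : 1 ≤ m) (hmδ : (m : ℝ) ≤ δ * n) :
    ∀ S : Finset (Fin n), (bipCount G S K : ℝ) ≤
      (d : ℝ) * S.card * K.card / n + α * Real.sqrt (K.card : ℝ) *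
        (((S.card / m : ℕ) : ℝ) * Real.sqrt (m : ℝ) + Real.sqrt ((S.card % m : ℕ) : ℝ)) := by
  suffices H : ∀ s : ℕ, ∀ S : Finset (Fin n), S.card = s → (bipCount G S K : ℝ) ≤
      (d : ℝ) * S.card * K.card / n + α * Real.sqrt (K.card : ℝ) *
        (((S.card / m : ℕ) : ℝ) * Real.sqrt (m : ℝ) + Real.sqrt ((S.card % m : ℕ) : ℝ)) by
    intro S; exact H S.card S rfl
  intro s
  induction s using Nat.strong_induction_on with
  | _ s ih =>
    intro S hS
    by_cases hsm : S.card ≤ m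
    · -- density directly
      have hd := hcond S K (le_trans (by exact_mod_cast hsm) hmδ) hK
      have hsq : Real.sqrt ((S.card : ℝ) * (K.card : ℝ)) ≤
          Real.sqrt (K.card : ℝ) * (((S.card / m : ℕ) : ℝ) * Real.sqrt (m : ℝ)
            + Real.sqrt ((S.card % m : ℕ) : ℝ)) := by
        rw [mul_comm ((S.card : ℝ)) _, Real.sqrt_mul (by positivity)]
        exact mul_le_mul_of_nonneg_left (sqrt_split S.card m) (Real.sqrt_nonneg _)
      calc (bipCount G S K : ℝ) ≤ (d : ℝ) * S.card * K.card / n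
            + α * Real.sqrt ((S.card : ℝ) * (K.card : ℝ)) := by exact_mod_cast hd
        _ ≤ _ := by
            have h5 := mul_le_mul_of_nonneg_left hsq hα0
            rw [← mul_assoc] at h5
            linarith
    · push_neg at hsm
      obtain ⟨B, hBS, hBcard⟩ := Finset.exists_subset_card_eq (le_of_lt hsm)
      set S' := S \ B with hS'
      have hcard' : S'.card = S.card - m := by rw [hS', Finset.card_sdiff_of_subset hBS, hBcard]
      have hlt : S.card - m < s := by omega
      have hsum : (bipCount G S K : ℝ) = (bipCount G B K : ℝ) + (bipCount G S' K : ℝ) := by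
        rw [bipCount_eq_sum, bipCount_eq_sum, bipCount_eq_sum]
        rw [← Finset.sum_sdiff hBS]
        push_cast
        ring
      have h1 := hcond B K (by rw [hBcard]; exact hmδ) hK
      have h2 := ih (S.card - m) hlt S' hcard'
      -- arithmetic
      have hq : S.card / m = (S.card - m) / m + 1 := Nat.div_eq_sub_div (by omega) (le_of_lt hsm)
      have hr : S.card % m = (S.card - m) % m := Nat.mod_eq_sub_mod (le_of_lt hsm)
      have hcasts : ((S.card - m : ℕ) : ℝ) = (S.card : ℝ) - (m : ℝ) := by
        have : m ≤ S.card := le_of_lt hsm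
        push_cast [this]; ring
      have hsqm : Real.sqrt ((m : ℝ) * (K.card : ℝ)) = Real.sqrt (K.card : ℝ) * Real.sqrt (m : ℝ) := by
        rw [Real.sqrt_mul (by positivity), mul_comm]
      rw [hBcard] at h1
      rw [hsqm] at h1
      rw [hcard', hcasts] at h2
      rw [hsum, hq, hr]
      push_cast
      push_cast at h2
      set q1 : ℕ := (S.card - m) / m
      set r1 : ℕ := (S.card - m) % m
      refine le_trans (add_le_add h1 h2) (le_of_eq ?_)
      ring

/-- The pure arithmetic chain for the covering case. -/
lemma cover_chain {mR sR q rR D : ℝ}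
    (hm1 : 1 ≤ mR) (hmD : mR ≤ D) (hDm : D < mR + 1) (hDs : D < sR)
    (hsmm : sR < (mR + 1) ^ 2) (hqm : q * mR ≤ sR) (hq0 : 0 ≤ q) (hr0 : 0 ≤ rR)
    (hes : sR = mR * q + rR) :
    q * Real.sqrt mR + Real.sqrt rR ≤ sR / Real.sqrt D + Real.sqrt sR := by
  have hD0 : (0:ℝ) < D := by linarith
  have hsD : 0 < Real.sqrt D := Real.sqrt_pos.2 hD0
  have hspos : (0:ℝ) < sR := by linarith
  set M : ℝ := Real.sqrt (mR + 1) with hMdef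
  set u : ℝ := Real.sqrt sR with hudef
  have hM2 : M ^ 2 = mR + 1 := Real.sq_sqrt (by linarith)
  have hM0 : 0 < M := Real.sqrt_pos.2 (by linarith)
  have hu2 : u ^ 2 = sR := Real.sq_sqrt hspos.le
  have hu0 : 0 ≤ u := Real.sqrt_nonneg _
  have em : Real.sqrt mR ^ 2 = mR := Real.sq_sqrt (by linarith)
  have er : Real.sqrt rR ^ 2 = rR := Real.sq_sqrt hr0
  -- q ≤ 2 u M
  have hq2' : q ^ 2 ≤ 4 * sR * (mR + 1) := by
    have e0 : (0:ℝ) ≤ q * mR := mul_nonneg hq0 (by linarith)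
    have e1 : (q * mR) * (q * mR) ≤ sR * sR := mul_self_le_mul_self e0 hqm
    have eA : sR * sR ≤ sR * (mR + 1) ^ 2 := by nlinarith
    have eB : (mR + 1) ^ 2 ≤ 4 * mR ^ 2 * (mR + 1) := by nlinarith
    have eC : sR * (mR + 1) ^ 2 ≤ sR * (4 * mR ^ 2 * (mR + 1)) :=
      mul_le_mul_of_nonneg_left eB hspos.le
    have e4 : q ^ 2 * mR ^ 2 ≤ (4 * sR * (mR + 1)) * mR ^ 2 := by nlinarith [e1, eA, eC]
    exact le_of_mul_le_mul_right (by linarith) (by positivity : (0:ℝ) < mR ^ 2)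
  have qa : q ≤ 2 * u * M := by
    have h6 : (2 * u * M) ^ 2 = 4 * sR * (mR + 1) := by
      rw [mul_pow, mul_pow, hu2, hM2]; ring
    calc q = Real.sqrt (q ^ 2) := (Real.sqrt_sq hq0).symm
      _ ≤ Real.sqrt ((2 * u * M) ^ 2) := Real.sqrt_le_sqrt (by rw [h6]; exact hq2')
      _ = 2 * u * M := Real.sqrt_sq (by positivity)
  -- step 1
  have step1 : q * Real.sqrt mR + Real.sqrt rR ≤ Real.sqrt ((q + 1) * sR) := by
    rw [← Real.sqrt_sq (by positivity : (0:ℝ) ≤ q * Real.sqrt mR + Real.sqrt rR)]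
    apply Real.sqrt_le_sqrt
    nlinarith [sq_nonneg (Real.sqrt mR - Real.sqrt rR), hq0,
      mul_nonneg (Real.sqrt_nonneg mR) (Real.sqrt_nonneg rR)]
  -- step 2
  have step2 : Real.sqrt ((q + 1) * sR) ≤ sR / M + u := by
    apply sqrt_le_of_sq (by positivity)
    have expand : (sR / M + u) ^ 2
        = (sR ^ 2 + 2 * sR * u * M + u ^ 2 * M ^ 2) / M ^ 2 := by
      field_simp; ring
    rw [expand, le_div_iff₀ (by positivity : (0:ℝ) < M ^ 2)]
    have e1 : q * (M ^ 2 - 1) ≤ sR := by rw [hM2]; linarith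
    have e2 := mul_le_mul_of_nonneg_right e1 hspos.le
    have e3 := mul_le_mul_of_nonneg_right qa hspos.le
    have e5 : u ^ 2 * M ^ 2 = sR * M ^ 2 := by rw [hu2]
    linarith [e2, e3, e5]
  -- step 3
  have hsqDM : Real.sqrt D ≤ M := Real.sqrt_le_sqrt hDm.le
  have step3 : sR / M ≤ sR / Real.sqrt D :=
    div_le_div_of_nonneg_left hspos.le hsD hsqDM
  calc q * Real.sqrt mR + Real.sqrt rR ≤ Real.sqrt ((q + 1) * sR) := step1
    _ ≤ sR / M + u := step2
    _ ≤ sR / Real.sqrt D + u := by linarith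

lemma lemA {n d : ℕ} (G : SimpleGraph (Fin n)) [DecidableRel G.Adj]
    {α δ : ℝ} (hreg : G.IsRegularOfDegree d)
    (hα1 : Real.sqrt d < α) (hα2 : α ≤ (d : ℝ))
    (hδn : 1 ≤ δ * n)
    (hcond : SmallSetBipDensity G d α δ)
    (K : Finset (Fin n)) (hK : (K.card : ℝ) ≤ δ * n) (S : Finset (Fin n)) :
    (bipCount G S K : ℝ) ≤ (d : ℝ) * S.card * K.card / n
      + α * Real.sqrt (K.card : ℝ) * S.card / Real.sqrt (δ * n)
      + α * Real.sqrt (K.card : ℝ) * Real.sqrt (S.card : ℝ) := by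
  have hα0 : 0 < α := lt_of_le_of_lt (Real.sqrt_nonneg _) hα1
  have hd0 : (0 : ℝ) < d := lt_of_lt_of_le hα0 hα2
  have hD0 : (0 : ℝ) < δ * n := lt_of_lt_of_le one_pos hδn
  have hsD : (0 : ℝ) < Real.sqrt (δ * n) := Real.sqrt_pos.2 hD0
  have hk0 : (0 : ℝ) ≤ (K.card : ℝ) := Nat.cast_nonneg _
  have hs0 : (0 : ℝ) ≤ (S.card : ℝ) := Nat.cast_nonneg _
  have hsqk0 : (0 : ℝ) ≤ Real.sqrt (K.card : ℝ) := Real.sqrt_nonneg _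
  have t1 : (0 : ℝ) ≤ (d : ℝ) * S.card * K.card / n := by positivity
  have t2 : (0 : ℝ) ≤ α * Real.sqrt (K.card : ℝ) * S.card / Real.sqrt (δ * n) := by positivity
  have t3 : (0 : ℝ) ≤ α * Real.sqrt (K.card : ℝ) * Real.sqrt (S.card : ℝ) := by positivity
  have ek : Real.sqrt (K.card : ℝ) * Real.sqrt (K.card : ℝ) = (K.card : ℝ) :=
    Real.mul_self_sqrt hk0
  by_cases h1 : (S.card : ℝ) ≤ δ * n
  · -- small set: density directly
    have hb := hcond S K h1 hK
    have hsq : Real.sqrt ((S.card : ℝ) * (K.card : ℝ))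
        = Real.sqrt (K.card : ℝ) * Real.sqrt (S.card : ℝ) := by
      rw [mul_comm ((S.card : ℝ)), Real.sqrt_mul hk0]
    rw [hsq] at hb
    linarith
  · push_neg at h1
    by_cases h2 : (K.card : ℝ) * (δ * n) ≤ α ^ 2
    · -- pair-count bound
      have hpair : (bipCount G S K : ℝ) ≤ (S.card : ℝ) * K.card := by
        exact_mod_cast bipCount_le_card_mul G S K
      have hkd : Real.sqrt (K.card : ℝ) * Real.sqrt (δ * n) ≤ α := by
        rw [← Real.sqrt_mul hk0]
        exact sqrt_le_of_sq hα0.le h2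
      have key : (S.card : ℝ) * K.card ≤ α * Real.sqrt (K.card : ℝ) * S.card / Real.sqrt (δ * n) := by
        rw [le_div_iff₀ hsD]
        have hmul := mul_le_mul_of_nonneg_right hkd
          (mul_nonneg hs0 hsqk0)
        have heq : Real.sqrt (K.card : ℝ) * Real.sqrt (δ * n) * ((S.card : ℝ) * Real.sqrt (K.card : ℝ))
            = (S.card : ℝ) * (K.card : ℝ) * Real.sqrt (δ * n) := by
          linear_combination ((S.card : ℝ) * Real.sqrt (δ * n)) * ek
        calc (S.card : ℝ) * K.card * Real.sqrt (δ * n)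
            = Real.sqrt (K.card : ℝ) * Real.sqrt (δ * n) * ((S.card : ℝ) * Real.sqrt (K.card : ℝ)) := heq.symm
          _ ≤ α * ((S.card : ℝ) * Real.sqrt (K.card : ℝ)) := hmul
          _ = α * Real.sqrt (K.card : ℝ) * (S.card : ℝ) := by ring
      linarith
    · push_neg at h2
      by_cases h3 : (d : ℝ) * Real.sqrt ((K.card : ℝ) * (δ * n)) ≤ α * S.card
      · -- trivial (regularity) bound
        have htriv : (bipCount G S K : ℝ) ≤ (d : ℝ) * K.card := by
          exact_mod_cast bipCount_le_reg G hreg S K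
        have key : (d : ℝ) * K.card ≤ α * Real.sqrt (K.card : ℝ) * S.card / Real.sqrt (δ * n) := by
          rw [le_div_iff₀ hsD]
          rw [Real.sqrt_mul hk0] at h3
          have hmul := mul_le_mul_of_nonneg_right h3 hsqk0
          have heq : (d : ℝ) * (Real.sqrt (K.card : ℝ) * Real.sqrt (δ * n)) * Real.sqrt (K.card : ℝ)
              = (d : ℝ) * (K.card : ℝ) * Real.sqrt (δ * n) := by
            linear_combination ((d : ℝ) * Real.sqrt (δ * n)) * ek
          calc (d : ℝ) * (K.card : ℝ) * Real.sqrt (δ * n)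
              = (d : ℝ) * (Real.sqrt (K.card : ℝ) * Real.sqrt (δ * n)) * Real.sqrt (K.card : ℝ) := heq.symm
            _ ≤ α * (S.card : ℝ) * Real.sqrt (K.card : ℝ) := hmul
            _ = α * Real.sqrt (K.card : ℝ) * (S.card : ℝ) := by ring
        linarith
      · -- covering
        push_neg at h3
        obtain ⟨m, hm1, hmD, hDm⟩ : ∃ m : ℕ, 1 ≤ m ∧ (m : ℝ) ≤ δ * n ∧ δ * (n : ℝ) < (m : ℝ) + 1 :=
          ⟨⌊δ * (n : ℝ)⌋₊, Nat.le_floor (by exact_mod_cast hδn), Nat.floor_le hD0.le,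
            Nat.lt_floor_add_one _⟩
        have hm1R : (1 : ℝ) ≤ (m : ℝ) := by exact_mod_cast hm1
        have hcov := cover_bound G hα0.le hcond K hK m hm1 hmD S
        have hkD0 : 0 < (K.card : ℝ) * (δ * n) := lt_of_le_of_lt (sq_nonneg α) h2
        have hkDm : (K.card : ℝ) * (δ * n) < ((m : ℝ) + 1) ^ 2 := by
          have hkd2 : (K.card : ℝ) ≤ δ * n := hK
          nlinarith
        have hsqkD : Real.sqrt ((K.card : ℝ) * (δ * n)) < (m : ℝ) + 1 := by
          calc Real.sqrt ((K.card : ℝ) * (δ * n)) < Real.sqrt (((m : ℝ) + 1) ^ 2) :=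
                Real.sqrt_lt_sqrt hkD0.le hkDm
            _ = (m : ℝ) + 1 := Real.sqrt_sq (by linarith)
        have hdlt : (d : ℝ) < ((m : ℝ) + 1) ^ 2 := by
          have hd : (d : ℝ) < α ^ 2 := by
            nlinarith [Real.sq_sqrt hd0.le, Real.sqrt_nonneg (d : ℝ)]
          linarith [h2, hkDm]
        have hsqd : Real.sqrt (d : ℝ) < (m : ℝ) + 1 := by
          calc Real.sqrt (d : ℝ) < Real.sqrt (((m : ℝ) + 1) ^ 2) :=
                Real.sqrt_lt_sqrt hd0.le hdlt
            _ = (m : ℝ) + 1 := Real.sqrt_sq (by linarith)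
        have hkD0' : 0 < Real.sqrt ((K.card : ℝ) * (δ * n)) := Real.sqrt_pos.2 hkD0
        have hslt : (S.card : ℝ) < Real.sqrt (d : ℝ) * Real.sqrt ((K.card : ℝ) * (δ * n)) := by
          have ed : Real.sqrt (d : ℝ) * Real.sqrt (d : ℝ) = (d : ℝ) := Real.mul_self_sqrt hd0.le
          have h4 : (d : ℝ) * Real.sqrt ((K.card : ℝ) * (δ * n))
              < α * (Real.sqrt (d : ℝ) * Real.sqrt ((K.card : ℝ) * (δ * n))) := by
            have h7 := mul_lt_mul_of_pos_right hα1 (mul_pos (Real.sqrt_pos.2 hd0) hkD0')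
            have heq : Real.sqrt (d : ℝ) * (Real.sqrt (d : ℝ) * Real.sqrt ((K.card : ℝ) * (δ * n)))
                = (d : ℝ) * Real.sqrt ((K.card : ℝ) * (δ * n)) := by
              linear_combination Real.sqrt ((K.card : ℝ) * (δ * n)) * ed
            linarith
          have h5 : α * (S.card : ℝ) < α * (Real.sqrt (d : ℝ) * Real.sqrt ((K.card : ℝ) * (δ * n))) :=
            lt_trans h3 h4
          exact lt_of_mul_lt_mul_left h5 hα0.le
        have hsmm : (S.card : ℝ) < ((m : ℝ) + 1) ^ 2 := by
          have h8 := mul_lt_mul'' hsqd hsqkD (Real.sqrt_nonneg _) (Real.sqrt_nonneg _)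
          have : ((m:ℝ) + 1) * ((m:ℝ) + 1) = ((m:ℝ) + 1)^2 := by ring
          linarith
        have hqm : ((S.card / m : ℕ) : ℝ) * (m : ℝ) ≤ (S.card : ℝ) := by
          exact_mod_cast Nat.cast_le.2 (Nat.div_mul_le_self S.card m)
        have hq0 : (0 : ℝ) ≤ ((S.card / m : ℕ) : ℝ) := Nat.cast_nonneg _
        have hr0 : (0 : ℝ) ≤ ((S.card % m : ℕ) : ℝ) := Nat.cast_nonneg _
        have hes : (S.card : ℝ) = (m : ℝ) * ((S.card / m : ℕ) : ℝ) + ((S.card % m : ℕ) : ℝ) := by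
          exact_mod_cast congrArg (Nat.cast : ℕ → ℝ) (Nat.div_add_mod S.card m).symm
        have key := cover_chain hm1R hmD hDm h1 hsmm hqm hq0 hr0 hes
        have h9 := mul_le_mul_of_nonneg_left key
          (by positivity : (0:ℝ) ≤ α * Real.sqrt (K.card : ℝ))
        have hring : α * Real.sqrt (K.card : ℝ) *
            ((S.card : ℝ) / Real.sqrt (δ * n) + Real.sqrt (S.card : ℝ))
            = α * Real.sqrt (K.card : ℝ) * (S.card : ℝ) / Real.sqrt (δ * n)
              + α * Real.sqrt (K.card : ℝ) * Real.sqrt (S.card : ℝ) := by ring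
        linarith [hcov, h9, hring]

section main

variable {n : ℕ} (G : SimpleGraph (Fin n)) [DecidableRel G.Adj]

/-- number of `K`-neighbours. -/
def wFun (K : Finset (Fin n)) : Fin n → ℕ := fun v => (K.filter fun u => G.Adj u v).card

noncomputable def aFun (p : Fin n → ℝ) (σ : Equiv.Perm (Fin n)) : ℕ → ℝ :=
  fun i => if h : i < n then p (σ ⟨i, h⟩) else 0

noncomputable def oFun (K : Finset (Fin n)) (σ : Equiv.Perm (Fin n)) : ℕ → ℝ :=
  fun i => if h : i < n then (wFun G K (σ ⟨i, h⟩) : ℝ) else 0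

def TSet (σ : Equiv.Perm (Fin n)) : ℕ → Finset (Fin n) :=
  fun i => (univ.filter fun v : Fin n => (v : ℕ) < i).image σ

lemma TSet_zero (σ : Equiv.Perm (Fin n)) : TSet σ 0 = ∅ := by
  simp [TSet]

lemma TSet_succ (σ : Equiv.Perm (Fin n)) (i : ℕ) (h : i < n) :
    TSet σ (i + 1) = insert (σ ⟨i, h⟩) (TSet σ i) := by
  rw [TSet, TSet, show (univ.filter fun v : Fin n => (v : ℕ) < i + 1)
      = insert (⟨i, h⟩ : Fin n) (univ.filter fun v : Fin n => (v : ℕ) < i) from ?_,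
    Finset.image_insert]
  ext x
  simp [Nat.lt_succ_iff_lt_or_eq, Fin.ext_iff, or_comm]
  omega

lemma TSet_notmem (σ : Equiv.Perm (Fin n)) (i : ℕ) (h : i < n) :
    σ ⟨i, h⟩ ∉ TSet σ i := by
  simp only [TSet, Finset.mem_image, Finset.mem_filter, Finset.mem_univ, true_and]
  rintro ⟨x, hx, hσx⟩
  have : x = ⟨i, h⟩ := σ.injective hσx
  rw [this] at hx
  exact lt_irrefl i hx

lemma TSet_card (σ : Equiv.Perm (Fin n)) : ∀ i, i ≤ n → (TSet σ i).card = i := by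
  intro i
  induction i with
  | zero => intro _; simp [TSet_zero]
  | succ i ih =>
    intro hi
    have h : i < n := lt_of_lt_of_le (Nat.lt_succ_self i) hi
    rw [TSet_succ σ i h, Finset.card_insert_of_notMem (TSet_notmem σ i h),
      ih (le_of_lt h)]

lemma W_eq (K : Finset (Fin n)) (σ : Equiv.Perm (Fin n)) :
    ∀ i, i ≤ n → ∑ j ∈ range i, oFun G K σ j = ∑ u ∈ TSet σ i, (wFun G K u : ℝ) := by
  intro i
  induction i with
  | zero => intro _; simp [TSet_zero]
  | succ i ih =>
    intro hi
    have h : i < n := lt_of_lt_of_le (Nat.lt_succ_self i) hi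
    rw [Finset.sum_range_succ, TSet_succ σ i h,
      Finset.sum_insert (TSet_notmem σ i h), ih (le_of_lt h), oFun, dif_pos h]
    ring

lemma bip_eq_w (K S : Finset (Fin n)) :
    (bipCount G S K : ℝ) = ∑ u ∈ S, (wFun G K u : ℝ) := by
  rw [bipCount_eq_sum]
  push_cast
  apply Finset.sum_congr rfl
  intro u _
  have : (K.filter fun v => G.Adj u v) = (K.filter fun v => G.Adj v u) := by
    apply Finset.filter_congr
    intro x _
    simp [G.adj_comm]
  rw [this, wFun]

lemma LHS_eq (d : ℕ) (K : Finset (Fin n)) (p : Fin n → ℝ) (σ : Equiv.Perm (Fin n)) :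
    ∑ u ∈ K, (walkMatrix G d).mulVec p u
      = (d : ℝ)⁻¹ * ∑ i ∈ range n, aFun p σ i * oFun G K σ i := by
  have h1 : ∀ u, (walkMatrix G d).mulVec p u
      = (d : ℝ)⁻¹ * ∑ v ∈ G.neighborFinset u, p v := by
    intro u
    rw [walkMatrix, Matrix.smul_mulVec, Pi.smul_apply, smul_eq_mul,
      SimpleGraph.adjMatrix_mulVec_apply]
  have h2 : ∑ u ∈ K, (walkMatrix G d).mulVec p u
      = (d : ℝ)⁻¹ * ∑ u ∈ K, ∑ v ∈ G.neighborFinset u, p v := by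
    rw [Finset.mul_sum]
    exact Finset.sum_congr rfl (fun u _ => h1 u)
  have h3 : ∑ u ∈ K, ∑ v ∈ G.neighborFinset u, p v
      = ∑ v : Fin n, (wFun G K v : ℝ) * p v := by
    have h4 : ∀ u, ∑ v ∈ G.neighborFinset u, p v
        = ∑ v : Fin n, if G.Adj u v then p v else 0 := by
      intro u
      rw [SimpleGraph.neighborFinset_eq_filter, Finset.sum_filter]
    rw [Finset.sum_congr rfl (fun u _ => h4 u), Finset.sum_comm]
    apply Finset.sum_congr rfl
    intro v _
    rw [← Finset.sum_filter, Finset.sum_const, wFun]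
    simp
  have h5 : ∑ v : Fin n, (wFun G K v : ℝ) * p v
      = ∑ i ∈ range n, aFun p σ i * oFun G K σ i := by
    rw [← Equiv.sum_comp σ (fun v => (wFun G K v : ℝ) * p v),
      ← Fin.sum_univ_eq_sum_range (fun j => aFun p σ j * oFun G K σ j) n]
    apply Finset.sum_congr rfl
    intro i _
    simp only [aFun, oFun, dif_pos i.isLt, Fin.eta]
    ring
  rw [h2, h3, h5]

end main

/-- bound on the mass that one random-walk step can place on a small
set `K`, in terms of the sorted entries of the initial distribution. -/
theorem walk_mass_on_small_set_of_small_set_bipartite_density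
    (n d : ℕ) (G : SimpleGraph (Fin n)) [DecidableRel G.Adj] (α δ : ℝ)
    (hreg : G.IsRegularOfDegree d)
    (hα1 : Real.sqrt d < α) (hα2 : α ≤ d)
    (hδ0 : 0 < δ) (hδ1 : δ ≤ 1) (hδn : 1 ≤ δ * n)
    (hcond : SmallSetBipDensity G d α δ)
    (p : Fin n → ℝ) (hp : IsProbDist p)
    (σ : Equiv.Perm (Fin n)) (hσ : ∀ i j : Fin n, i ≤ j → p (σ j) ≤ p (σ i)) :
    ∀ K : Finset (Fin n), K.Nonempty → (K.card : ℝ) ≤ δ * n →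
      ∑ u ∈ K, (walkMatrix G d).mulVec p u ≤
        (K.card : ℝ) / n + (α / d) * Real.sqrt (K.card / (δ * n)) +
          (α / d) * Real.sqrt K.card * ∑ i : Fin n, p (σ i) / Real.sqrt ((i : ℕ) + 1) := by
  intro K _hKne hK
  obtain ⟨hp0, hp1⟩ := hp
  have hα0 : 0 < α := lt_of_le_of_lt (Real.sqrt_nonneg _) hα1
  have hd0 : (0 : ℝ) < d := lt_of_lt_of_le hα0 hα2
  have hD0 : (0 : ℝ) < δ * n := lt_of_lt_of_le one_pos hδn
  have hsD : (0 : ℝ) < Real.sqrt (δ * n) := Real.sqrt_pos.2 hD0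
  have hn0 : (0 : ℝ) < n := by
    nlinarith [mul_nonneg (sub_nonneg.2 hδ1) (Nat.cast_nonneg n : (0:ℝ) ≤ n)]
  have hk0 : (0 : ℝ) ≤ (K.card : ℝ) := Nat.cast_nonneg _
  have hsqk0 : (0 : ℝ) ≤ Real.sqrt (K.card : ℝ) := Real.sqrt_nonneg _
  have hamono : ∀ i j : ℕ, i ≤ j → aFun p σ j ≤ aFun p σ i := by
    intro i j hij
    unfold aFun
    by_cases hj : j < n
    · have hi : i < n := lt_of_le_of_lt hij hj
      rw [dif_pos hj, dif_pos hi]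
      exact hσ ⟨i, hi⟩ ⟨j, hj⟩ hij
    · rw [dif_neg hj]
      by_cases hi : i < n
      · rw [dif_pos hi]; exact hp0 _
      · rw [dif_neg hi]
  have ha0 : ∀ i, 0 ≤ aFun p σ i := by
    intro i; unfold aFun
    by_cases hi : i < n
    · rw [dif_pos hi]; exact hp0 _
    · rw [dif_neg hi]
  set bf : ℕ → ℝ := fun j => (d : ℝ) * K.card / n
    + α * Real.sqrt (K.card : ℝ) / Real.sqrt (δ * n)
    + α * Real.sqrt (K.card : ℝ) * (1 / Real.sqrt ((j : ℝ) + 1)) with hbf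
  have hW : ∀ i, i ≤ n → ∑ j ∈ range i, oFun G K σ j ≤ ∑ j ∈ range i, bf j := by
    intro i hi
    have hWe : ∑ j ∈ range i, oFun G K σ j = (bipCount G (TSet σ i) K : ℝ) := by
      rw [W_eq G K σ i hi, bip_eq_w]
    have hlem := lemA G hreg hα1 hα2 hδn hcond K hK (TSet σ i)
    rw [TSet_card σ i hi] at hlem
    have hGi := sqrt_le_sum_inv_sqrt i
    have hsum : ∑ j ∈ range i, bf j
        = (i : ℝ) * ((d : ℝ) * K.card / n)
          + (i : ℝ) * (α * Real.sqrt (K.card : ℝ) / Real.sqrt (δ * n))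
          + α * Real.sqrt (K.card : ℝ) * (∑ j ∈ range i, 1 / Real.sqrt ((j : ℝ) + 1)) := by
      rw [hbf, Finset.sum_add_distrib, Finset.sum_add_distrib, Finset.sum_const,
        Finset.sum_const, Finset.card_range, ← Finset.mul_sum, nsmul_eq_mul, nsmul_eq_mul]
    have hmul := mul_le_mul_of_nonneg_left hGi
      (by positivity : (0:ℝ) ≤ α * Real.sqrt (K.card : ℝ))
    have hr1 : α * Real.sqrt (K.card : ℝ) * (i : ℝ) / Real.sqrt (δ * n)
        = (i : ℝ) * (α * Real.sqrt (K.card : ℝ) / Real.sqrt (δ * n)) := by ring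
    have hr2 : (d : ℝ) * (i : ℝ) * (K.card : ℝ) / n = (i : ℝ) * ((d : ℝ) * K.card / n) := by ring
    rw [hWe, hsum]
    linarith [hlem, hmul]
  have habel := abel_le (aFun p σ) (oFun G K σ) bf n hamono ha0 hW
  have hsuma : ∑ i ∈ range n, aFun p σ i = 1 := by
    rw [← Fin.sum_univ_eq_sum_range (aFun p σ) n,
      show ∑ i : Fin n, aFun p σ (i : ℕ) = ∑ i : Fin n, p (σ i) from
        Finset.sum_congr rfl (fun i _ => by simp [aFun, i.isLt, Fin.eta]),
      Equiv.sum_comp σ p]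
    exact hp1
  have hsumtail : ∑ i ∈ range n, aFun p σ i * (1 / Real.sqrt ((i : ℝ) + 1))
      = ∑ i : Fin n, p (σ i) / Real.sqrt ((i : ℕ) + 1) := by
    rw [← Fin.sum_univ_eq_sum_range (fun j => aFun p σ j * (1 / Real.sqrt ((j : ℝ) + 1))) n]
    apply Finset.sum_congr rfl
    intro i _
    simp [aFun, i.isLt, Fin.eta, div_eq_mul_inv]
  have hbfsum : ∑ i ∈ range n, aFun p σ i * bf i
      = (d : ℝ) * K.card / n + α * Real.sqrt (K.card : ℝ) / Real.sqrt (δ * n)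
        + α * Real.sqrt (K.card : ℝ) * (∑ i : Fin n, p (σ i) / Real.sqrt ((i : ℕ) + 1)) := by
    have hexp : ∀ i ∈ range n, aFun p σ i * bf i
        = aFun p σ i * ((d : ℝ) * K.card / n)
          + aFun p σ i * (α * Real.sqrt (K.card : ℝ) / Real.sqrt (δ * n))
          + α * Real.sqrt (K.card : ℝ) * (aFun p σ i * (1 / Real.sqrt ((i : ℝ) + 1))) := by
      intro i _; rw [hbf]; ring
    rw [Finset.sum_congr rfl hexp, Finset.sum_add_distrib, Finset.sum_add_distrib,
      ← Finset.sum_mul, ← Finset.sum_mul, ← Finset.mul_sum, hsuma, hsumtail]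
    ring
  have hdne : (d : ℝ) ≠ 0 := ne_of_gt hd0
  have hsDne : Real.sqrt (δ * n) ≠ 0 := ne_of_gt hsD
  have hnne : (n : ℝ) ≠ 0 := ne_of_gt hn0
  rw [LHS_eq G d K p σ]
  calc (d : ℝ)⁻¹ * ∑ i ∈ range n, aFun p σ i * oFun G K σ i
      ≤ (d : ℝ)⁻¹ * ∑ i ∈ range n, aFun p σ i * bf i := by
        apply mul_le_mul_of_nonneg_left habel (by positivity)
    _ = (K.card : ℝ) / n + (α / d) * Real.sqrt ((K.card : ℝ) / (δ * n)) +
          (α / d) * Real.sqrt (K.card : ℝ) * ∑ i : Fin n, p (σ i) / Real.sqrt ((i : ℕ) + 1) := by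
        rw [hbfsum, Real.sqrt_div hk0]
        field_simp
end

section
/- Let G be a d-regular graph on n vertices with d ≥ 8, and let V = B ⊔ R be a partition of the vertex set such that: (i) every subset W₁ ⊆ B satisfies |N(W₁)| ≥ (d/2)·|W₁|, and (ii) every subset W₂ ⊆ R with |W₂| ≤ n/d satisfies |N(W₂)| ≥ (d/2)·|W₂|. Then every set W ⊆ V with |W| ≤ n/d has vertex boundary satisfying |∂W| ≥ (d/8)·|W|. -/
open Finset

/-- The neighbourhood `N(W)` of a set of vertices. -/
def nbhd {n : ℕ} (G : SimpleGraph (Fin n)) [DecidableRel G.Adj]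
    (W : Finset (Fin n)) : Finset (Fin n) :=
  W.biUnion (fun v => G.neighborFinset v)

/-- small-set vertex expansion of the two-part construction. -/
theorem small_set_vertex_expansion_of_partition
    (n d : ℕ) (G : SimpleGraph (Fin n)) [DecidableRel G.Adj]
    (B R : Finset (Fin n))
    (hreg : G.IsRegularOfDegree d) (hd : 8 ≤ d)
    (hdisj : Disjoint B R) (hcover : B ∪ R = Finset.univ)
    (hB : ∀ W₁ ⊆ B, (d : ℝ) / 2 * W₁.card ≤ ((nbhd G W₁).card : ℝ))
    (hR : ∀ W₂ ⊆ R, (W₂.card : ℝ) ≤ (n : ℝ) / d →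
      (d : ℝ) / 2 * W₂.card ≤ ((nbhd G W₂).card : ℝ)) :
    ∀ W : Finset (Fin n), (W.card : ℝ) ≤ (n : ℝ) / d →
      (d : ℝ) / 8 * W.card ≤ (((nbhd G W) \ W).card : ℝ) := by
  intro W hW
  set W1 := W ∩ B with hW1def
  set W2 := W ∩ R with hW2def
  have hcard : W.card = W1.card + W2.card := by
    rw [← Finset.card_union_of_disjoint
      (Finset.disjoint_of_subset_left Finset.inter_subset_right
        (Finset.disjoint_of_subset_right Finset.inter_subset_right hdisj))]
    congr 1
    rw [← Finset.inter_union_distrib_left, hcover, Finset.inter_univ]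
  have hsub1 : nbhd G W1 ⊆ nbhd G W :=
    Finset.biUnion_subset_biUnion_of_subset_left _ Finset.inter_subset_left
  have hsub2 : nbhd G W2 ⊆ nbhd G W :=
    Finset.biUnion_subset_biUnion_of_subset_left _ Finset.inter_subset_left
  have key : (d : ℝ) / 2 * (W.card / 2) ≤ ((nbhd G W).card : ℝ) := by
    rcases le_total W1.card W2.card with h | h
    · have h2 : (W.card : ℝ) / 2 ≤ W2.card := by
        have : (W.card : ℝ) = W1.card + W2.card := by exact_mod_cast hcard
        have : (W1.card : ℝ) ≤ W2.card := by exact_mod_cast h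
        linarith
      have hW2card : (W2.card : ℝ) ≤ (n : ℝ) / d := by
        refine le_trans ?_ hW
        exact_mod_cast Finset.card_le_card Finset.inter_subset_left
      have := hR W2 Finset.inter_subset_right hW2card
      have hmono : ((nbhd G W2).card : ℝ) ≤ (nbhd G W).card := by
        exact_mod_cast Finset.card_le_card hsub2
      have hd0 : (0 : ℝ) ≤ (d : ℝ) / 2 := by positivity
      nlinarith
    · have h2 : (W.card : ℝ) / 2 ≤ W1.card := by
        have : (W.card : ℝ) = W1.card + W2.card := by exact_mod_cast hcard
        have : (W2.card : ℝ) ≤ W1.card := by exact_mod_cast h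
        linarith
      have := hB W1 Finset.inter_subset_right
      have hmono : ((nbhd G W1).card : ℝ) ≤ (nbhd G W).card := by
        exact_mod_cast Finset.card_le_card hsub1
      have hd0 : (0 : ℝ) ≤ (d : ℝ) / 2 := by positivity
      nlinarith
  have hsd : ((nbhd G W).card : ℝ) ≤ ((nbhd G W \ W).card : ℝ) + W.card := by
    have : nbhd G W ⊆ (nbhd G W \ W) ∪ W := by
      intro x hx
      by_cases hxW : x ∈ W
      · exact Finset.mem_union_right _ hxW
      · exact Finset.mem_union_left _ (Finset.mem_sdiff.mpr ⟨hx, hxW⟩)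
    calc ((nbhd G W).card : ℝ) ≤ (((nbhd G W \ W) ∪ W).card : ℝ) := by
          exact_mod_cast Finset.card_le_card this
      _ ≤ ((nbhd G W \ W).card : ℝ) + W.card := by
          exact_mod_cast Finset.card_union_le _ _
  have hd8 : (8 : ℝ) ≤ (d : ℝ) := by exact_mod_cast hd
  have hWc0 : (0 : ℝ) ≤ (W.card : ℝ) := Nat.cast_nonneg _
  nlinarith
end
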